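/- arXiv:1911.01413 — 8 statements merged into one kernel-verified Lean document; each statement's English description precedes it below -/
import Mathlib

section
/- Let A ∈ ℝ^{L₁×L₂} and B ∈ ℝ^{L₂×L₃} with L₁ ≥ L₂. Then for any ε > 0 there exists C ∈ ℝ^{L₁×L₂} with Frobenius norm ‖C‖_F < ε such that the row space of (C+A)B equals the row space of B. -/
/-!
If `M` has a left inverse `N`, then `B = N * (M * B)`, so the rows of `M * B` and of `B` span
the same space. A matrix `M` with `L₁ ≥ L₂` rows has a left inverse as soon as its top square
block is invertible. Adding `t` to the diagonal of the top block `A'` of `A` turns its determinant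
into `det (t • 1 + A')`, the characteristic polynomial of `-A'` evaluated at `t`;
being monic, it has finitely many roots, so arbitrarily small `t` make the block invertible.
-/

open Matrix Filter Topology

namespace Matrix

section RowSpan

variable {R m n p : Type*} [Fintype m] [Fintype n]

theorem span_range_row_mul_le [CommSemiring R] (M : Matrix m n R) (B : Matrix n p R) :
    Submodule.span R (Set.range (M * B).row) ≤ Submodule.span R (Set.range B.row) := by
  rw [← range_vecMulLinear, ← range_vecMulLinear]
  rintro _ ⟨v, rfl⟩
  exact ⟨v ᵥ* M, by simp [vecMul_vecMul]⟩

theorem span_range_row_mul_of_mul_eq_one [CommSemiring R] [DecidableEq n]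
    {M : Matrix m n R} {N : Matrix n m R} (hNM : N * M = 1) (B : Matrix n p R) :
    Submodule.span R (Set.range (M * B).row) = Submodule.span R (Set.range B.row) :=
  (span_range_row_mul_le M B).antisymm <| by
    simpa [← Matrix.mul_assoc, hNM] using span_range_row_mul_le N (M * B)

theorem exists_mul_eq_one_of_isUnit_det_submatrix [CommRing R] [DecidableEq m] [DecidableEq n]
    {M : Matrix m n R} (e : n → m) (h : IsUnit (M.submatrix e id).det) :
    ∃ N : Matrix n m R, N * M = 1 := by
  refine ⟨(M.submatrix e id)⁻¹ * (1 : Matrix m m R).submatrix e id, ?_⟩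
  have hrows : (1 : Matrix m m R).submatrix e id * M = M.submatrix e id := by
    simpa using (submatrix_mul 1 M e id id Function.bijective_id).symm
  rw [Matrix.mul_assoc, hrows, nonsing_inv_mul _ h]

end RowSpan

theorem eventually_isUnit_det_smul_one_add {𝕜 n : Type*} [Field 𝕜] [TopologicalSpace 𝕜]
    [T1Space 𝕜] [Fintype n] [DecidableEq n] (A : Matrix n n 𝕜) (a : 𝕜) :
    ∀ᶠ t in 𝓝[≠] a, IsUnit (t • 1 + A).det := by
  have hroots : {t | (-A).charpoly.IsRoot t}.Finite :=
    Polynomial.finite_setOfPred_isRoot (charpoly_monic _).ne_zero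
  filter_upwards [nhdsNE_of_nhdsNE_sdiff_finite univ_mem hroots] with t ht
  have hdet : (t • 1 + A).det = (-A).charpoly.eval t := by
    simp [eval_charpoly, smul_one_eq_diagonal]
  rw [isUnit_iff_ne_zero, hdet]
  exact ht.2

end Matrix

/-- For A ∈ ℝ^{L₁×L₂}, B ∈ ℝ^{L₂×L₃} with L₁ ≥ L₂ and any ε > 0, there is a
matrix C with Frobenius norm < ε such that the row space of (C+A)B equals the
row space of B. -/
theorem exists_small_perturbation_row_space (L₁ L₂ L₃ : ℕ) (h : L₂ ≤ L₁)
    (A : Matrix (Fin L₁) (Fin L₂) ℝ) (B : Matrix (Fin L₂) (Fin L₃) ℝ)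
    (ε : ℝ) (hε : 0 < ε) :
    ∃ C : Matrix (Fin L₁) (Fin L₂) ℝ,
      Real.sqrt (∑ i, ∑ j, (C i j) ^ 2) < ε ∧
      Submodule.span ℝ (Set.range fun i => ((C + A) * B) i) =
        Submodule.span ℝ (Set.range fun i => B i) := by
  set J : Matrix (Fin L₁) (Fin L₂) ℝ :=
    (1 : Matrix (Fin L₁) (Fin L₁) ℝ).submatrix id (Fin.castLE h)
  have hsmall : ∀ᶠ t in 𝓝 (0 : ℝ), Real.sqrt (∑ i, ∑ j, ((t • J) i j) ^ 2) < ε := by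
    have hcont : Continuous fun t : ℝ => Real.sqrt (∑ i, ∑ j, ((t • J) i j) ^ 2) := by
      fun_prop
    exact hcont.continuousAt.eventually_lt continuousAt_const (by simpa using hε)
  obtain ⟨t, hnorm, hdet⟩ := ((hsmall.filter_mono nhdsWithin_le_nhds).and
    (eventually_isUnit_det_smul_one_add (A.submatrix (Fin.castLE h) id) 0)).exists
  have hblock :
      (t • J + A).submatrix (Fin.castLE h) id = t • 1 + A.submatrix (Fin.castLE h) id := by
    rw [← submatrix_one _ (Fin.castLE_injective h)]
    rfl
  obtain ⟨N, hN⟩ := exists_mul_eq_one_of_isUnit_det_submatrix (Fin.castLE h) (hblock ▸ hdet)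
  exact ⟨t • J, hnorm, span_range_row_mul_of_mul_eq_one hN B⟩
end

section
/- Let σ: ℝ → ℝ be continuous and let x, y ∈ ℝ with x ≠ 0 and y ≠ 0. Define E(v, w, b) = (y − v·σ(wx + b))². Suppose that for every t ∈ ℝ with σ(t) = 0, t is neither a local maximum nor a local minimum of σ. Then every local minimum of E is a global minimum (i.e., achieves E = 0, provided σ is not identically zero). -/
/-!
Write `t = w x + b`, so that the loss is `(y - v σ t)²` with `t` ranging freely as `b` does.
If `σ t ≠ 0`, the loss is a nondegenerate quadratic in `v`, so a local minimum in `v` alone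
already kills the residual. If `σ t = 0`, the loss equals `y²` on the whole line
`{(v', t)}`, so every nearby `(v', t)` is again a local minimum and we may take `v' ≠ 0`.
As `t` is not a local extremum of `σ`, there are points arbitrarily close to `t` where
`v' σ` is small (by continuity) and of the sign of `y`; there the loss drops below `y²`
unless `y = 0`.
-/

open Filter Topology

theorem IsLocalMin.eventually_isLocalMin_of_eq {X β : Type*} [TopologicalSpace X] [Preorder β]
    {f : X → β} {a : X} (h : IsLocalMin f a) : ∀ᶠ b in 𝓝 a, f b = f a → IsLocalMin f b :=
  h.eventually_nhds.mono fun _ hb hfb => hb.mono fun _ hc => hfb ▸ hc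

theorem sub_mul_eq_zero_of_isLocalMin {y c v : ℝ} (hc : c ≠ 0)
    (h : IsLocalMin (fun v => (y - v * c) ^ 2) v) : y - v * c = 0 := by
  have hderiv : HasDerivAt (fun v => (y - v * c) ^ 2) (2 * (y - v * c) * -c) v := by
    simpa using (((hasDerivAt_id v).mul_const c).const_sub y).fun_pow 2
  simpa [hc] using h.hasDerivAt_eq_zero hderiv

theorem sub_sq_lt_sq_of_mul_pos {y u : ℝ} (hyu : 0 < y * u) (hu : |u| < |y|) :
    (y - u) ^ 2 < y ^ 2 := by
  rcases lt_or_gt_of_ne (left_ne_zero_of_mul hyu.ne') with hy | hy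
  · have hu' : u < 0 := neg_of_mul_pos_right hyu hy.le
    rw [abs_of_neg hu', abs_of_neg hy] at hu
    nlinarith
  · have hu' : 0 < u := pos_of_mul_pos_right hyu hy.le
    rw [abs_of_pos hu', abs_of_pos hy] at hu
    nlinarith

theorem not_isLocalMin_sq_sub_of_frequently_mul_pos {u : ℝ → ℝ} {t₀ y : ℝ}
    (hu : ContinuousAt u t₀) (hu₀ : u t₀ = 0) (hfreq : ∃ᶠ t in 𝓝 t₀, 0 < y * u t) :
    ¬ IsLocalMin (fun t => (y - u t) ^ 2) t₀ := by
  intro hmin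
  obtain ⟨t, hyu⟩ := hfreq.exists
  have hy : y ≠ 0 := left_ne_zero_of_mul hyu.ne'
  have hsmall : ∀ᶠ t in 𝓝 t₀, |u t| < |y| :=
    hu.abs.eventually_lt continuousAt_const (by simpa [hu₀] using hy)
  obtain ⟨t, hyu, hut, hle⟩ := (hfreq.and_eventually (hsmall.and hmin)).exists
  simp only [hu₀, sub_zero] at hle
  exact (sub_sq_lt_sq_of_mul_pos hyu hut).not_ge hle

theorem frequently_mul_pos_of_not_isLocalExtr {σ : ℝ → ℝ} {t₀ c : ℝ} (hσ₀ : σ t₀ = 0)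
    (hmax : ¬ IsLocalMax σ t₀) (hmin : ¬ IsLocalMin σ t₀) (hc : c ≠ 0) :
    ∃ᶠ t in 𝓝 t₀, 0 < c * σ t := by
  rcases hc.lt_or_gt with hc | hc
  · refine (not_eventually.mp hmin).mono fun t ht => mul_pos_of_neg_of_neg hc ?_
    rw [hσ₀] at ht
    exact not_le.mp ht
  · refine (not_eventually.mp hmax).mono fun t ht => mul_pos hc ?_
    rw [hσ₀] at ht
    exact not_le.mp ht

theorem eq_zero_of_isLocalMin_sq_sub_mul_of_map_eq_zero {σ : ℝ → ℝ} {v t₀ y : ℝ}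
    (hσ : Continuous σ) (hσ₀ : σ t₀ = 0) (hmax : ¬ IsLocalMax σ t₀) (hmin : ¬ IsLocalMin σ t₀)
    (h : IsLocalMin (fun p : ℝ × ℝ => (y - p.1 * σ p.2) ^ 2) (v, t₀)) : y = 0 := by
  by_contra hy
  have hnear : ∀ᶠ v' in 𝓝 v, IsLocalMin (fun p : ℝ × ℝ => (y - p.1 * σ p.2) ^ 2) (v', t₀) :=
    ((Continuous.prodMk_left t₀).continuousAt.eventually
      h.eventually_isLocalMin_of_eq).mono fun v' hv' => hv' (by simp [hσ₀])
  have hne : ∃ᶠ v' in 𝓝 v, v' ≠ 0 := mem_closure_iff_frequently.mp (dense_compl_singleton 0 v)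
  obtain ⟨v', hv', hmin'⟩ := (hne.and_eventually hnear).exists
  have hslice : IsLocalMin (fun t => (y - v' * σ t) ^ 2) t₀ :=
    hmin'.comp_continuous (g := fun t => (v', t)) (Continuous.prodMk_right v').continuousAt
  refine not_isLocalMin_sq_sub_of_frequently_mul_pos (u := fun t => v' * σ t)
    (continuous_const.mul hσ).continuousAt (by simp [hσ₀]) ?_ hslice
  simpa only [mul_assoc] using
    frequently_mul_pos_of_not_isLocalExtr hσ₀ hmax hmin (mul_ne_zero hy hv')

theorem sq_sub_mul_eq_zero_of_isLocalMin {σ : ℝ → ℝ} {v t y : ℝ} (hσ : Continuous σ)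
    (hzero : ∀ t, σ t = 0 → ¬ IsLocalMax σ t ∧ ¬ IsLocalMin σ t)
    (h : IsLocalMin (fun p : ℝ × ℝ => (y - p.1 * σ p.2) ^ 2) (v, t)) :
    (y - v * σ t) ^ 2 = 0 := by
  by_cases hσ₀ : σ t = 0
  · obtain ⟨hmax, hmin⟩ := hzero t hσ₀
    simp [hσ₀, eq_zero_of_isLocalMin_sq_sub_mul_of_map_eq_zero hσ hσ₀ hmax hmin h]
  · have hslice : IsLocalMin (fun v' => (y - v' * σ t) ^ 2) v :=
      h.comp_continuous (g := fun v' => (v', t)) (Continuous.prodMk_left t).continuousAt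
    simp [sub_mul_eq_zero_of_isLocalMin hσ₀ hslice]

theorem single_neuron_no_bad_local_min_general (σ : ℝ → ℝ) (hσ : Continuous σ)
    (x y : ℝ)
    (hzero : ∀ t, σ t = 0 → ¬ IsLocalMax σ t ∧ ¬ IsLocalMin σ t) :
    ∀ θ : ℝ × ℝ × ℝ,
      IsLocalMin (fun θ : ℝ × ℝ × ℝ =>
        (y - θ.1 * σ (θ.2.1 * x + θ.2.2)) ^ 2) θ →
      (y - θ.1 * σ (θ.2.1 * x + θ.2.2)) ^ 2 = 0 := by
  rintro ⟨v, w, b⟩ h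
  let shiftBias : ℝ × ℝ → ℝ × ℝ × ℝ := fun p => (p.1, w, p.2 - w * x)
  have hshift : shiftBias (v, w * x + b) = (v, w, b) := by simp [shiftBias]
  rw [← hshift] at h
  have hreduced := h.comp_continuous (by fun_prop : Continuous shiftBias).continuousAt
  simp only [shiftBias, Function.comp_def, add_sub_cancel] at hreduced
  exact sq_sub_mul_eq_zero_of_isLocalMin hσ hzero hreduced

/-- If σ is continuous and no zero of σ is a local max or local min of σ, then
the single-neuron loss E(v,w,b) = (y − v·σ(wx+b))² has no sub-optimal local
minima: every local minimum achieves zero loss. -/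
theorem single_neuron_no_bad_local_min (σ : ℝ → ℝ) (hσ : Continuous σ)
    (x y : ℝ) (hx : x ≠ 0) (hy : y ≠ 0)
    (hzero : ∀ t, σ t = 0 → ¬ IsLocalMax σ t ∧ ¬ IsLocalMin σ t) :
    ∀ θ : ℝ × ℝ × ℝ,
      IsLocalMin (fun θ : ℝ × ℝ × ℝ =>
        (y - θ.1 * σ (θ.2.1 * x + θ.2.2)) ^ 2) θ →
      (y - θ.1 * σ (θ.2.1 * x + θ.2.2)) ^ 2 = 0 :=
  single_neuron_no_bad_local_min_general σ hσ x y hzero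
end

section
/- Let σ: ℝ → ℝ be continuous and suppose there exists t₀ ∈ ℝ such that σ(t₀) = 0 and t₀ is a local minimum of σ. Let x, y ∈ ℝ with x ≠ 0 and y ≠ 0. Then the function E(v, w, b) = (y − v·σ(wx + b))² has a sub-optimal local minimum: explicitly, any point (v₀, w₀, b₀) with w₀ = t₀/x, b₀ = 0, and v₀·y < 0 is a local minimum of E with E(v₀, w₀, b₀) = y² > 0, while inf E < y² whenever σ is not identically zero. -/
/-- If σ is continuous with a zero t₀ that is a local minimum of σ, then the
single-neuron loss has a sub-optimal local minimum at (v₀, t₀/x, 0) for any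
v₀ with v₀·y < 0, with value y² > 0, while inf E < y² if σ is not identically
zero. -/
theorem single_neuron_bad_local_min (σ : ℝ → ℝ) (hσ : Continuous σ)
    (t₀ : ℝ) (ht₀ : σ t₀ = 0) (hmin : IsLocalMin σ t₀)
    (x y : ℝ) (hx : x ≠ 0) (hy : y ≠ 0)
    (v₀ : ℝ) (hv₀ : v₀ * y < 0) :
    IsLocalMin (fun θ : ℝ × ℝ × ℝ =>
        (y - θ.1 * σ (θ.2.1 * x + θ.2.2)) ^ 2) (v₀, t₀ / x, 0) ∧
    (y - v₀ * σ ((t₀ / x) * x + 0)) ^ 2 = y ^ 2 ∧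
    0 < y ^ 2 ∧
    ((∃ t, σ t ≠ 0) → ∃ θ : ℝ × ℝ × ℝ,
      (y - θ.1 * σ (θ.2.1 * x + θ.2.2)) ^ 2 < y ^ 2) := by
  have hg : (t₀ / x) * x + 0 = t₀ := by field_simp; ring
  refine ⟨?_, by rw [hg, ht₀]; ring, by positivity, ?_⟩
  · have hcg : ContinuousAt (fun θ : ℝ × ℝ × ℝ => θ.2.1 * x + θ.2.2)
        (v₀, t₀ / x, 0) := by fun_prop
    have hσpos : ∀ᶠ θ : ℝ × ℝ × ℝ in nhds (v₀, t₀ / x, 0),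
        0 ≤ σ (θ.2.1 * x + θ.2.2) := by
      have h0 : ∀ᶠ t in nhds t₀, 0 ≤ σ t := by
        filter_upwards [hmin] with t ht
        rw [ht₀] at ht; exact ht
      have := hcg.tendsto
      rw [show ((v₀, t₀ / x, 0) : ℝ × ℝ × ℝ).2.1 * x + ((v₀, t₀ / x, 0) : ℝ × ℝ × ℝ).2.2 = t₀ from hg] at this
      exact this.eventually h0
    have hvy : ∀ᶠ θ : ℝ × ℝ × ℝ in nhds (v₀, t₀ / x, 0), θ.1 * y < 0 := by
      have hc : ContinuousAt (fun θ : ℝ × ℝ × ℝ => θ.1 * y) (v₀, t₀ / x, 0) := by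
        fun_prop
      exact hc.eventually_lt continuousAt_const hv₀
    filter_upwards [hσpos, hvy] with θ h1 h2
    rw [hg, ht₀]
    have : θ.1 * y * σ (θ.2.1 * x + θ.2.2) ≤ 0 :=
      mul_nonpos_of_nonpos_of_nonneg h2.le h1
    nlinarith [sq_nonneg (θ.1 * σ (θ.2.1 * x + θ.2.2))]
  · rintro ⟨t, ht⟩
    refine ⟨(y / σ t, t / x, 0), ?_⟩
    have : (t / x) * x + 0 = t := by field_simp; ring
    rw [this]
    have : y - y / σ t * σ t = 0 := by field_simp; ring
    rw [this]
    norm_num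
    positivity
end

section
/- Let N, d₁, d₂ be positive integers, σ: ℝ → ℝ twice differentiable, x ∈ ℝ^N an input data vector, and y ∈ ℝ^N. For parameters Θ = (v, w, b) ∈ ℝ^{d₁} × ℝ^{d₁} × ℝ^{d₁}, define for each i the vector z_i = w_i·x + b_i·1_N ∈ ℝ^N, the network output t(Θ) = Σᵢ vᵢ·σ(z_i) (σ applied componentwise), the residual Δy = t(Θ) − y, and the loss E(Θ) = ‖y − t(Θ)‖₂². Suppose that for all 1 ≤ i ≤ d₁: ⟨Δy, σ(z_i)⟩ = 0, ⟨Δy, σ'(z_i)⟩ = 0, ⟨Δy, vᵢ·σ'(z_i)∘x⟩ = 0, ⟨Δy, vᵢ·σ''(z_i)∘x⟩ = 0, ⟨Δy, vᵢ·σ''(z_i)⟩ > 0, and ⟨Δy, vᵢ·σ''(z_i)∘x∘x⟩ > 0, where ∘ is the Hadamard (entrywise) product. Then Θ is a local minimum of E. -/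
/-!
Write `t(Θ)` for the network output. Then
`E(Θ') - E(Θ) = 2 ⟨Δy, t(Θ') - t(Θ)⟩ + ‖t(Θ') - t(Θ)‖²` and `⟨Δy, t(Θ)⟩ = ∑ᵢ vᵢ ⟨Δy, σ(zᵢ)⟩ = 0`,
so it suffices that every `v'ᵢ ⟨Δy, σ(w'ᵢ x + b'ᵢ)⟩` is nonnegative near `Θ`. As a function of
`(w'ᵢ, b'ᵢ)`, `vᵢ ⟨Δy, σ(w'ᵢ x + b'ᵢ)⟩` vanishes at `(wᵢ, bᵢ)` together with its gradient, and its
Hessian there is `diag(⟨Δy, vᵢ σ''(zᵢ) ∘ x ∘ x⟩, ⟨Δy, vᵢ σ''(zᵢ)⟩)`, which is positive definite; by the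
second-order Taylor expansion it is nonnegative nearby. Finally `v'ᵢ` has the sign of `vᵢ` near `vᵢ`.
-/

open Filter Topology Finset Asymptotics

theorem taylor_two_isLittleO {f : ℝ → ℝ} {z : ℝ} (hf : Differentiable ℝ f)
    (hf' : DifferentiableAt ℝ (deriv f) z) :
    (fun h => f (z + h) - f z - deriv f z * h - deriv (deriv f) z / 2 * h ^ 2) =o[𝓝 0]
      fun h => h ^ 2 := by
  -- the first-order expansion of `deriv f` at `z`, integrated by the mean value inequality
  have hderiv : ∀ h ∈ Set.univ, HasDerivWithinAt
      (fun h => f (z + h) - deriv f z * h - deriv (deriv f) z / 2 * h ^ 2)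
      (deriv f (z + h) - deriv f z - deriv (deriv f) z * h) Set.univ h := by
    intro h _
    have hfz : HasDerivAt (fun h => f (z + h)) (deriv f (z + h)) h :=
      (hf (z + h)).hasDerivAt.comp_const_add z h
    refine (((hfz.sub ((hasDerivAt_id h).const_mul (deriv f z))).sub
      (((hasDerivAt_id h).pow 2).const_mul (deriv (deriv f) z / 2))).congr_deriv
        ?_).hasDerivWithinAt
    simp only [mul_one, Nat.cast_ofNat, id_eq, Nat.add_one_sub_one, pow_one]
    ring
  have hlin : (fun h => deriv f (z + h) - deriv f z - deriv (deriv f) z * h)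
      =o[𝓝[Set.univ] 0] fun h => (h - 0) ^ 1 := by
    simpa [mul_comm] using hasDerivAt_iff_isLittleO_nhds_zero.1 hf'.hasDerivAt
  have := convex_univ.isLittleO_pow_succ_real (Set.mem_univ 0) hderiv hlin
  rw [nhdsWithin_univ] at this
  exact (this.congr_left fun h => by ring_nf).congr_right fun h => by ring

theorem isLocalMin_of_isLittleO_sub {E : Type*} [SeminormedAddCommGroup E] {f q : E → ℝ}
    {x₀ : E} {m : ℝ} (hm : 0 < m) (hq : ∀ u, m * ‖u‖ ^ 2 ≤ q u)
    (hf : (fun u => f (x₀ + u) - f x₀ - q u) =o[𝓝 0] fun u => ‖u‖ ^ 2) :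
    IsLocalMin f x₀ := by
  have hnear : ∀ᶠ u in 𝓝 0, f x₀ ≤ f (x₀ + u) := by
    filter_upwards [hf.bound hm] with u hu
    rw [Real.norm_eq_abs, norm_pow, norm_norm] at hu
    linarith [hq u, neg_abs_le (f (x₀ + u) - f x₀ - q u)]
  have hsub : Tendsto (fun x => x - x₀) (𝓝 x₀) (𝓝 0) := tendsto_sub_nhds_zero_iff.2 tendsto_id
  filter_upwards [hsub.eventually hnear] with x hx
  simpa using hx

theorem sq_norm_le_sq_fst_add_sq_snd (u : ℝ × ℝ) : ‖u‖ ^ 2 ≤ u.1 ^ 2 + u.2 ^ 2 := by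
  rw [Prod.norm_def, Real.norm_eq_abs, Real.norm_eq_abs]
  rcases max_cases |u.1| |u.2| with ⟨h, -⟩ | ⟨h, -⟩ <;> rw [h, sq_abs] <;> nlinarith

theorem isLittleO_comp_affine {R : ℝ → ℝ} (hR : R =o[𝓝 0] fun h => h ^ 2) (c : ℝ) :
    (fun u : ℝ × ℝ => R (u.1 * c + u.2)) =o[𝓝 0] fun u => ‖u‖ ^ 2 := by
  set L : ℝ × ℝ →L[ℝ] ℝ := c • ContinuousLinearMap.fst ℝ ℝ ℝ + ContinuousLinearMap.snd ℝ ℝ ℝ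
  have hL : ∀ u, L u = u.1 * c + u.2 := fun u => by simp [L, mul_comm]
  simp only [← hL]
  exact (hR.comp_tendsto (L.continuous.tendsto' 0 0 (map_zero L))).trans_isBigO
    ((L.isBigO_id _).norm_right.pow 2)

theorem isLocalMin_sum_mul_comp_affine {ι : Type*} [Fintype ι] {σ : ℝ → ℝ}
    (hσ : Differentiable ℝ σ) (hσ' : Differentiable ℝ (deriv σ)) {a x : ι → ℝ} {w b : ℝ}
    (hb : ∑ n, a n * deriv σ (w * x n + b) = 0)
    (hw : ∑ n, a n * deriv σ (w * x n + b) * x n = 0)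
    (hwb : ∑ n, a n * deriv (deriv σ) (w * x n + b) * x n = 0)
    (hbb : 0 < ∑ n, a n * deriv (deriv σ) (w * x n + b))
    (hww : 0 < ∑ n, a n * deriv (deriv σ) (w * x n + b) * x n * x n) :
    IsLocalMin (fun p : ℝ × ℝ => ∑ n, a n * σ (p.1 * x n + p.2)) (w, b) := by
  set z : ι → ℝ := fun n => w * x n + b
  set A := ∑ n, a n * deriv (deriv σ) (z n) * x n * x n
  set C := ∑ n, a n * deriv (deriv σ) (z n)
  set R : ι → ℝ → ℝ := fun n h =>
    σ (z n + h) - σ (z n) - deriv σ (z n) * h - deriv (deriv σ) (z n) / 2 * h ^ 2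
  have hexpand : ∀ u : ℝ × ℝ, ∑ n, a n * σ (((w, b) + u).1 * x n + ((w, b) + u).2)
      - ∑ n, a n * σ (w * x n + b) - (A * u.1 ^ 2 + C * u.2 ^ 2) / 2
      = ∑ n, a n * R n (u.1 * x n + u.2) := by
    intro u
    have hsplit : ∑ n, a n * R n (u.1 * x n + u.2) = ∑ n, a n * σ (z n + (u.1 * x n + u.2))
        - ∑ n, a n * σ (z n) - (u.1 * ∑ n, a n * deriv σ (z n) * x n
          + u.2 * ∑ n, a n * deriv σ (z n))
        - (u.1 ^ 2 * A + 2 * u.1 * u.2 * ∑ n, a n * deriv (deriv σ) (z n) * x n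
          + u.2 ^ 2 * C) / 2 := by
      simp only [A, C, R, mul_sum, ← sum_add_distrib, sum_div, ← sum_sub_distrib]
      exact sum_congr rfl fun n _ => by ring
    rw [hsplit, hw, hb, hwb]
    simp only [z, Prod.fst_add, Prod.snd_add]
    ring_nf
  refine isLocalMin_of_isLittleO_sub (q := fun u => (A * u.1 ^ 2 + C * u.2 ^ 2) / 2)
    (m := min A C / 2) (by positivity) (fun u => ?_) ?_
  · have hnorm := mul_le_mul_of_nonneg_left (sq_norm_le_sq_fst_add_sq_snd u) (le_min hww.le hbb.le)
    have hA := mul_le_mul_of_nonneg_right (min_le_left A C) (sq_nonneg u.1)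
    have hC := mul_le_mul_of_nonneg_right (min_le_right A C) (sq_nonneg u.2)
    linarith
  · simp only [hexpand]
    exact IsLittleO.fun_sum fun n _ =>
      (isLittleO_comp_affine (taylor_two_isLittleO hσ (hσ' (z n))) (x n)).const_mul_left (a n)

theorem sum_sq_sub_le_of_sum_mul_le {ι : Type*} [Fintype ι] (y t s : ι → ℝ)
    (h : ∑ n, (t n - y n) * t n ≤ ∑ n, (t n - y n) * s n) :
    ∑ n, (y n - t n) ^ 2 ≤ ∑ n, (y n - s n) ^ 2 := by
  have hexpand : ∑ n, (y n - s n) ^ 2 = ∑ n, (y n - t n) ^ 2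
      + 2 * (∑ n, (t n - y n) * s n - ∑ n, (t n - y n) * t n) + ∑ n, (s n - t n) ^ 2 := by
    simp only [mul_sum, ← sum_sub_distrib, ← sum_add_distrib]
    exact sum_congr rfl fun n _ => by ring
  rw [hexpand]
  nlinarith [sum_nonneg fun n (_ : n ∈ univ) => sq_nonneg (s n - t n)]

theorem sum_mul_sum_mul_comm {ι κ : Type*} [Fintype ι] [Fintype κ] (r : ι → ℝ) (c : κ → ℝ)
    (g : κ → ι → ℝ) : ∑ n, r n * ∑ i, c i * g i n = ∑ i, c i * ∑ n, r n * g i n := by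
  simp only [mul_sum]
  rw [sum_comm]
  exact sum_congr rfl fun i _ => sum_congr rfl fun n _ => by ring

theorem local_min_of_system_general (N d₁ : ℕ)
    (σ : ℝ → ℝ) (hσ : Differentiable ℝ σ) (hσ' : Differentiable ℝ (deriv σ))
    (x y : Fin N → ℝ) (v w b : Fin d₁ → ℝ)
    (Δy : Fin N → ℝ)
    (hΔ : Δy = fun n => (∑ j, v j * σ (w j * x n + b j)) - y n)
    (h1 : ∀ i, ∑ n, Δy n * σ (w i * x n + b i) = 0)
    (h2 : ∀ i, ∑ n, Δy n * deriv σ (w i * x n + b i) = 0)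
    (h3 : ∀ i, ∑ n, Δy n * (v i * deriv σ (w i * x n + b i) * x n) = 0)
    (h4 : ∀ i, ∑ n, Δy n * (v i * deriv (deriv σ) (w i * x n + b i) * x n) = 0)
    (h5 : ∀ i, 0 < ∑ n, Δy n * (v i * deriv (deriv σ) (w i * x n + b i)))
    (h6 : ∀ i, 0 < ∑ n,
      Δy n * (v i * deriv (deriv σ) (w i * x n + b i) * x n * x n)) :
    IsLocalMin (fun Θ : (Fin d₁ → ℝ) × (Fin d₁ → ℝ) × (Fin d₁ → ℝ) =>
      ∑ n, (y n - ∑ i, Θ.1 i * σ (Θ.2.1 i * x n + Θ.2.2 i)) ^ 2)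
      (v, w, b) := by
  have hv : ∀ i, v i ≠ 0 := fun i hvi => by simpa [hvi] using h5 i
  have hneuron : ∀ i, ∀ᶠ Θ in 𝓝 (v, w, b),
      0 ≤ Θ.1 i * ∑ n, Δy n * σ (Θ.2.1 i * x n + Θ.2.2 i) := by
    intro i
    have hmin : IsLocalMin (fun p : ℝ × ℝ => ∑ n, v i * Δy n * σ (p.1 * x n + p.2)) (w i, b i) :=
      isLocalMin_sum_mul_comp_affine hσ hσ'
        (by simp only [mul_assoc, ← mul_sum, h2 i, mul_zero])
        ((sum_congr rfl fun n _ => by ring).trans (h3 i))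
        ((sum_congr rfl fun n _ => by ring).trans (h4 i))
        ((h5 i).trans_eq (sum_congr rfl fun n _ => by ring))
        ((h6 i).trans_eq (sum_congr rfl fun n _ => by ring))
    have hsign : ∀ᶠ Θ in 𝓝 (v, w, b), 0 < Θ.1 i * v i :=
      continuousAt_const.eventually_lt (by fun_prop) (mul_self_pos.2 (hv i))
    have hmin_comp := hmin.comp_continuous (g := fun Θ => (Θ.2.1 i, Θ.2.2 i)) (b := (v, w, b))
      (by fun_prop)
    -- `Θ.1 i` has the sign of `v i`, and `v i * ⟨Δy, σ(…)⟩ ≥ 0` by the local minimality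
    filter_upwards [hsign, hmin_comp] with Θ hΘv hΘmin
    simp only [Function.comp, mul_assoc, ← mul_sum, h1 i, mul_zero] at hΘmin
    nlinarith [mul_self_pos.2 (hv i)]
  have hres : ∀ n, (∑ j, v j * σ (w j * x n + b j)) - y n = Δy n := fun n => (congrFun hΔ n).symm
  filter_upwards [eventually_all.2 hneuron] with Θ hΘ
  refine sum_sq_sub_le_of_sum_mul_le _ _ _ ?_
  simp only [hres, sum_mul_sum_mul_comm Δy, h1, mul_zero, sum_const_zero]
  exact sum_nonneg fun i _ => hΘ i

/-- Sufficient condition (an equation/inequality system) for a weight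
configuration of a 1-hidden-layer network to be a local minimum of the
quadratic empirical loss. -/
theorem local_min_of_system (N d₁ d₂ : ℕ) (hN : 0 < N) (hd₁ : 0 < d₁)
    (hd₂ : 0 < d₂)
    (σ : ℝ → ℝ) (hσ : Differentiable ℝ σ) (hσ' : Differentiable ℝ (deriv σ))
    (x y : Fin N → ℝ) (v w b : Fin d₁ → ℝ)
    (Δy : Fin N → ℝ)
    (hΔ : Δy = fun n => (∑ j, v j * σ (w j * x n + b j)) - y n)
    (h1 : ∀ i, ∑ n, Δy n * σ (w i * x n + b i) = 0)
    (h2 : ∀ i, ∑ n, Δy n * deriv σ (w i * x n + b i) = 0)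
    (h3 : ∀ i, ∑ n, Δy n * (v i * deriv σ (w i * x n + b i) * x n) = 0)
    (h4 : ∀ i, ∑ n, Δy n * (v i * deriv (deriv σ) (w i * x n + b i) * x n) = 0)
    (h5 : ∀ i, 0 < ∑ n, Δy n * (v i * deriv (deriv σ) (w i * x n + b i)))
    (h6 : ∀ i, 0 < ∑ n,
      Δy n * (v i * deriv (deriv σ) (w i * x n + b i) * x n * x n)) :
    IsLocalMin (fun Θ : (Fin d₁ → ℝ) × (Fin d₁ → ℝ) × (Fin d₁ → ℝ) =>
      ∑ n, (y n - ∑ i, Θ.1 i * σ (Θ.2.1 i * x n + Θ.2.2 i)) ^ 2)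
      (v, w, b) :=
  local_min_of_system_general N d₁ σ hσ hσ' x y v w b Δy hΔ h1 h2 h3 h4 h5 h6
end

section
/- Let σ: ℝ → ℝ be a function that is linear on an open interval (a−δ, a+δ) with slope 0, i.e., σ(t) = β for all t ∈ (a−δ, a+δ). Consider a fully-connected network with H hidden layers, widths d₀, d₁, ..., d_{H+1}, input data X ∈ ℝ^{d₀×N}, output data Y ∈ ℝ^{d_{H+1}×N}, and loss E(Θ) = ‖Y − W_{H+1}σ(W_H σ(⋯σ(W₁X + b₁1ᵀ)⋯) + b_H 1ᵀ)‖_F². Suppose rank([Xᵀ, 1_N, Yᵀ]) > rank([Xᵀ, 1_N]). Define Θ by W_h = 0, b_h = a·1 for h = 1,...,H, and W_{H+1} ∈ argmin_V ‖Y − β·V·1_{d_H×N}‖_F². Then Θ is a local minimum of E with E(Θ) > 0. -/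
/-!
Near the base point every hidden pre-activation stays in the interval on which `σ ≡ β`, so all
hidden outputs equal `β` and the loss depends on the output layer `V` only through
`β * ∑ j, V k j`, which `Wout` minimises. The loss cannot vanish: otherwise every row of `Y`
would be a multiple of the all-ones vector, and appending `Yᵀ` to `[Xᵀ, 1]` could not raise
its rank.
-/

/-- Outputs of the hidden layers of a fully connected network:
`hiddenOut σ d N X W b h` is the output matrix of the h-th layer (layer 0 is
the input X). -/
noncomputable def hiddenOut (σ : ℝ → ℝ) (d : ℕ → ℕ) (N : ℕ)
    (X : Matrix (Fin (d 0)) (Fin N) ℝ)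
    (W : (h : ℕ) → Matrix (Fin (d (h + 1))) (Fin (d h)) ℝ)
    (b : (h : ℕ) → Fin (d (h + 1)) → ℝ) :
    (h : ℕ) → Matrix (Fin (d h)) (Fin N) ℝ
  | 0 => X
  | h + 1 => Matrix.of fun i n =>
      σ ((∑ j, W h i j * hiddenOut σ d N X W b h j n) + b h i)

open Filter Topology Matrix

section Rank

variable {R K m n o ι κ : Type*}

theorem Matrix.rank_fromCols_mul_le [CommRing R] [StrongRankCondition R] [Fintype n]
    [Fintype o] [DecidableEq n] (M : Matrix m n R) (C : Matrix n o R) :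
    (fromCols M (M * C)).rank ≤ M.rank := by
  have h := rank_mul_le_left M (fromCols (1 : Matrix n n R) C)
  rwa [mul_fromCols, Matrix.mul_one] at h

variable [CommRing K] [StrongRankCondition K] [Fintype ι] [Fintype κ] [DecidableEq ι]

theorem Matrix.rank_fromCols_const_le (A : Matrix m ι K) (c : κ → K) :
    (fromCols (fromCols A (of fun (_ : m) (_ : Unit) => (1 : K)))
      (of fun (_ : m) k => c k)).rank ≤
      (fromCols A (of fun (_ : m) (_ : Unit) => (1 : K))).rank := by
  have hc : (of fun (_ : m) k => c k : Matrix m κ K) =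
      fromCols A (of fun (_ : m) (_ : Unit) => (1 : K)) *
        (of fun i k => Sum.elim 0 (fun _ => c k) i : Matrix (ι ⊕ Unit) κ K) := by
    ext i k
    rw [mul_apply, Fintype.sum_sum_type]
    simp
  rw [hc]
  exact rank_fromCols_mul_le _ _

theorem Matrix.exists_ne_const_of_rank_lt {ν : Type*} [Fintype ν] (X : Matrix ι ν K)
    (Y : Matrix κ ν K)
    (hrank : (fromCols Xᵀ (of fun (_ : ν) (_ : Unit) => (1 : K))).rank <
      (fromCols (fromCols Xᵀ (of fun (_ : ν) (_ : Unit) => (1 : K))) Yᵀ).rank) (c : κ → K) :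
    ∃ k n, Y k n ≠ c k := by
  by_contra! hY
  have hYc : Yᵀ = of fun _ k => c k := by
    ext n k
    exact hY k n
  rw [hYc] at hrank
  exact (rank_fromCols_const_le _ c).not_gt hrank

end Rank

section Network

abbrev HiddenParams (d : ℕ → ℕ) : Type :=
  ((h : ℕ) → Matrix (Fin (d (h + 1))) (Fin (d h)) ℝ) ×
    ((h : ℕ) → Fin (d (h + 1)) → ℝ)

variable {σ : ℝ → ℝ} {a β : ℝ} {d : ℕ → ℕ} {N : ℕ}

theorem eventually_activation_eq_const (hσ : ∀ᶠ t in 𝓝 a, σ t = β) (h : ℕ)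
    (z : Matrix (Fin (d h)) (Fin N) ℝ) :
    ∀ᶠ p : HiddenParams d in 𝓝 (fun _ => 0, fun _ _ => a),
      ∀ i n, σ ((∑ j, p.1 h i j * z j n) + p.2 h i) = β := by
  simp only [eventually_all]
  intro i n
  have hcont : Continuous fun p : HiddenParams d => (∑ j, p.1 h i j * z j n) + p.2 h i := by
    fun_prop
  refine (hcont.tendsto _).eventually (p := fun t => σ t = β) ?_
  simpa using hσ

theorem hiddenOut_eventually_eq_const (hσ : ∀ᶠ t in 𝓝 a, σ t = β)
    (X : Matrix (Fin (d 0)) (Fin N) ℝ) (h : ℕ) :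
    ∀ᶠ p : HiddenParams d in 𝓝 (fun _ => 0, fun _ _ => a),
      ∀ j n, hiddenOut σ d N X p.1 p.2 (h + 1) j n = β := by
  induction h with
  | zero => exact eventually_activation_eq_const hσ 0 X
  | succ h ih =>
    filter_upwards [ih, eventually_activation_eq_const hσ (h + 1) fun _ _ => β]
      with p hp hact i n
    simp only [hiddenOut.eq_2, of_apply, hp]
    exact hact i n

theorem sum_sq_sub_mul_of_forall_eq {ι κ ν : Type*} [Fintype ι] [Fintype κ] [Fintype ν]
    (Y : Matrix κ ν ℝ) (V : Matrix κ ι ℝ) {Z : Matrix ι ν ℝ} (hZ : ∀ j n, Z j n = β) :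
    ∑ k, ∑ n, (Y k n - ∑ j, V k j * Z j n) ^ 2 =
      ∑ k, ∑ n, (Y k n - β * ∑ j, V k j) ^ 2 := by
  simp only [hZ, ← Finset.sum_mul, mul_comm β]

end Network

/-- For an activation that is constant (= β) on an interval around a, and data
with rank([Xᵀ,1,Yᵀ]) > rank([Xᵀ,1]), the configuration with zero hidden
weights, biases a, and an optimal output layer is a local minimum of the
quadratic loss with positive loss value. -/
theorem constant_piece_bad_local_min
    (H N dout : ℕ) (hH : 0 < H) (d : ℕ → ℕ)
    (σ : ℝ → ℝ) (a δ β : ℝ) (hδ : 0 < δ)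
    (hσ : ∀ t ∈ Set.Ioo (a - δ) (a + δ), σ t = β)
    (X : Matrix (Fin (d 0)) (Fin N) ℝ) (Y : Matrix (Fin dout) (Fin N) ℝ)
    (hrank : (Matrix.of fun (n : Fin N) =>
        (Sum.elim (fun i : Fin (d 0) => X i n) (fun _ : Unit => (1 : ℝ)) :
          Fin (d 0) ⊕ Unit → ℝ)).rank <
      (Matrix.of fun (n : Fin N) =>
        (Sum.elim (Sum.elim (fun i : Fin (d 0) => X i n)
            (fun _ : Unit => (1 : ℝ))) (fun k : Fin dout => Y k n) :
          (Fin (d 0) ⊕ Unit) ⊕ Fin dout → ℝ)).rank)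
    (Wout : Matrix (Fin dout) (Fin (d H)) ℝ)
    (hWout : ∀ V : Matrix (Fin dout) (Fin (d H)) ℝ,
      ∑ k, ∑ n, (Y k n - β * ∑ j, Wout k j) ^ 2 ≤
      ∑ k, ∑ n, (Y k n - β * ∑ j, V k j) ^ 2) :
    IsLocalMin
      (fun Θ : ((h : ℕ) → Matrix (Fin (d (h + 1))) (Fin (d h)) ℝ) ×
          ((h : ℕ) → Fin (d (h + 1)) → ℝ) ×
          Matrix (Fin dout) (Fin (d H)) ℝ =>
        ∑ k, ∑ n, (Y k n -
          ∑ j, Θ.2.2 k j * hiddenOut σ d N X Θ.1 Θ.2.1 H j n) ^ 2)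
      (fun _ => 0, fun _ _ => a, Wout) ∧
    0 < ∑ k, ∑ n, (Y k n -
      ∑ j, Wout k j *
        hiddenOut σ d N X (fun _ => 0) (fun _ _ => a) H j n) ^ 2 := by
  obtain ⟨m, rfl⟩ := Nat.exists_eq_add_one_of_ne_zero hH.ne'
  have hσ' : ∀ᶠ t in 𝓝 a, σ t = β :=
    eventually_of_mem (Ioo_mem_nhds (by linarith) (by linarith)) hσ
  have hnear : ∀ᶠ Θ in 𝓝 ((fun _ => 0, fun _ _ => a, Wout) :
      ((h : ℕ) → Matrix (Fin (d (h + 1))) (Fin (d h)) ℝ) ×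
        ((h : ℕ) → Fin (d (h + 1)) → ℝ) × Matrix (Fin dout) (Fin (d (m + 1))) ℝ),
      ∀ j n, hiddenOut σ d N X Θ.1 Θ.2.1 (m + 1) j n = β :=
    ((continuous_fst.prodMk continuous_snd.fst).tendsto
        (fun _ => 0, fun _ _ => a, Wout)).eventually
      (p := fun p : HiddenParams d => ∀ j n, hiddenOut σ d N X p.1 p.2 (m + 1) j n = β)
      (hiddenOut_eventually_eq_const hσ' X m)
  have hbase : ∀ j n, hiddenOut σ d N X (fun _ => 0) (fun _ _ => a) (m + 1) j n = β :=
    hnear.self_of_nhds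
  refine ⟨?_, ?_⟩
  · filter_upwards [hnear] with Θ hΘ
    rw [sum_sq_sub_mul_of_forall_eq Y _ hΘ, sum_sq_sub_mul_of_forall_eq Y _ hbase]
    exact hWout Θ.2.2
  · rw [sum_sq_sub_mul_of_forall_eq Y _ hbase]
    obtain ⟨k, n, hkn⟩ := exists_ne_const_of_rank_lt X Y hrank fun k => β * ∑ j, Wout k j
    exact Finset.sum_pos' (fun _ _ => by positivity) ⟨k, Finset.mem_univ _,
      Finset.sum_pos' (fun _ _ => by positivity) ⟨n, Finset.mem_univ _,
        sq_pos_of_ne_zero (sub_ne_zero.2 hkn)⟩⟩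
end

section
/- Let σ: ℝ → ℝ be linear on (a−δ, a+δ): σ(t) = α(t−a) + β for t ∈ (a−δ, a+δ), with α ≠ 0. Consider a fully-connected network with H hidden layers, each hidden width d_h > d₀, input X ∈ ℝ^{d₀×N}, output Y ∈ ℝ^{d_{H+1}×N}, and quadratic loss E. Assume rank([Xᵀ, 1_N, Yᵀ]) > rank([Xᵀ, 1_N]). Then E has a local minimum Θ with E(Θ) > 0. -/
open scoped Matrix

theorem Matrix.exists_col_notMem_span_cols_of_rank_lt {m n p R : Type*} [Fintype n] [Fintype p]
    [Field R] (A : Matrix m n R) (B : Matrix m p R) (h : A.rank < (Matrix.fromCols A B).rank) :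
    ∃ k, B.col k ∉ Submodule.span R (Set.range A.col) := by
  by_contra! hB
  have hspan : Submodule.span R (Set.range (A.fromCols B).col) =
      Submodule.span R (Set.range A.col) := by
    refine le_antisymm (Submodule.span_le.2 ?_) (Submodule.span_mono ?_)
    · rintro _ ⟨k | k, rfl⟩
      · exact Submodule.subset_span ⟨k, rfl⟩
      · exact hB k
    · rintro _ ⟨k, rfl⟩
      exact ⟨Sum.inl k, rfl⟩
  rw [Matrix.rank_eq_finrank_span_cols, Matrix.rank_eq_finrank_span_cols, hspan] at h
  exact h.false

theorem Submodule.exists_isMinOn_sum_sq_sub {ι : Type*} [Fintype ι]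
    (S : Submodule ℝ (ι → ℝ)) (y : ι → ℝ) :
    ∃ z ∈ S, IsMinOn (fun w : ι → ℝ => ∑ i, (y i - w i) ^ 2) S z := by
  let S' := S.comap (WithLp.linearEquiv 2 ℝ (ι → ℝ)).toLinearMap
  let y' : EuclideanSpace ℝ ι := WithLp.toLp 2 y
  have hnorm (w : ι → ℝ) : ‖y' - WithLp.toLp 2 w‖ ^ 2 = ∑ i, (y i - w i) ^ 2 :=
    EuclideanSpace.real_norm_sq_eq _
  refine ⟨(S'.starProjection y').ofLp, S'.starProjection_apply_mem y', fun w hw => ?_⟩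
  show ∑ i, (y i - (S'.starProjection y').ofLp i) ^ 2 ≤ ∑ i, (y i - w i) ^ 2
  rw [← hnorm, ← hnorm, WithLp.toLp_ofLp]
  gcongr
  rw [Submodule.starProjection_minimal]
  exact ciInf_le ⟨0, Set.forall_mem_range.mpr fun _ => norm_nonneg _⟩ (⟨WithLp.toLp 2 w, hw⟩ : S')

theorem sum_sq_sub_pos_of_ne {ι : Type*} [Fintype ι] {x y : ι → ℝ} (h : x ≠ y) :
    0 < ∑ i, (x i - y i) ^ 2 := by
  obtain ⟨i, hi⟩ := Function.ne_iff.1 h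
  exact Finset.sum_pos' (fun _ _ => sq_nonneg _) ⟨i, Finset.mem_univ _, by
    have := sub_ne_zero.2 hi
    positivity⟩

theorem sum_sum_sq_sub_le_of_rows_mem {ι κ μ : Type*} [Fintype ι] [Fintype κ] [Fintype μ]
    {S : Submodule ℝ (ι → ℝ)} {Y : Matrix κ ι ℝ} {z : κ → ι → ℝ}
    (hz : ∀ k, IsMinOn (fun w : ι → ℝ => ∑ i, (Y k i - w i) ^ 2) S (z k))
    {M : Matrix μ ι ℝ} (hM : ∀ j, M j ∈ S) (V : Matrix κ μ ℝ) :
    ∑ k, ∑ i, (Y k i - z k i) ^ 2 ≤ ∑ k, ∑ i, (Y k i - ∑ j, V k j * M j i) ^ 2 := by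
  refine Finset.sum_le_sum fun k _ => isMinOn_iff.1 (hz k) (fun i => ∑ j, V k j * M j i) ?_
  have hrow : (fun i => ∑ j, V k j * M j i) = ∑ j, V k j • M j := by
    ext i
    simp [Finset.sum_apply]
  rw [hrow]
  exact S.sum_mem fun j _ => S.smul_mem _ (hM j)

theorem exists_pos_forall_mul_mem_Ioo {ι : Type*} [Finite ι] (x : ι → ℝ) {δ : ℝ} (hδ : 0 < δ) :
    ∃ ε > 0, ∀ i, ε * x i ∈ Set.Ioo (-δ) δ := by
  have hnear : ∀ᶠ ε in nhds (0 : ℝ), ∀ i, ε * x i ∈ Set.Ioo (-δ) δ :=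
    Filter.eventually_all.2 fun i => (continuous_mul_const (x i)).continuousAt.eventually_mem
      (isOpen_Ioo.mem_nhds (by simp [hδ]))
  obtain ⟨ε, hεx, hε⟩ :=
    ((hnear.filter_mono (nhdsWithin_le_nhds (s := Set.Ioi 0))).and self_mem_nhdsWithin).exists
  exact ⟨ε, hε, hεx⟩

theorem sum_ite_diag_mul {m n k : ℕ} (hkm : k ≤ m) (c : ℝ) (v : Fin m → ℝ) (i : Fin n) :
    ∑ j : Fin m, (if (i : ℕ) < k ∧ (j : ℕ) = i then c else 0) * v j =
      if hi : (i : ℕ) < k then c * v ⟨i, hi.trans_le hkm⟩ else 0 := by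
  split_ifs with hi
  · rw [Finset.sum_eq_single ⟨i, hi.trans_le hkm⟩ (fun j _ hj => by
      rw [if_neg fun h => hj (Fin.ext h.2), zero_mul]) (by simp)]
    simp [hi]
  · simp [hi]

abbrev Weights (d : ℕ → ℕ) := (h : ℕ) → Matrix (Fin (d (h + 1))) (Fin (d h)) ℝ

abbrev Biases (d : ℕ → ℕ) := (h : ℕ) → Fin (d (h + 1)) → ℝ

section Network

variable {d : ℕ → ℕ} {N : ℕ} (X : Matrix (Fin (d 0)) (Fin N) ℝ)

noncomputable def preAct (σ : ℝ → ℝ) (W : Weights d) (b : Biases d) (h : ℕ) (i : Fin (d (h + 1)))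
    (n : Fin N) : ℝ :=
  ∑ j, W h i j * hiddenOut σ d N X W b h j n + b h i

theorem hiddenOut_succ_apply (σ : ℝ → ℝ) (W : Weights d) (b : Biases d) (h : ℕ)
    (i : Fin (d (h + 1))) (n : Fin N) :
    hiddenOut σ d N X W b (h + 1) i n = σ (preAct X σ W b h i n) :=
  rfl

theorem hiddenOut_eq_of_preAct_mem {σ τ : ℝ → ℝ} {s : Set ℝ} (hστ : Set.EqOn σ τ s)
    {W : Weights d} {b : Biases d} {h : ℕ} (hs : ∀ h' < h, ∀ i n, preAct X τ W b h' i n ∈ s) :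
    hiddenOut σ d N X W b h = hiddenOut τ d N X W b h := by
  induction h with
  | zero => rfl
  | succ h ih =>
    ext i n
    rw [hiddenOut_succ_apply, hiddenOut_succ_apply, preAct, ih fun h' hh' => hs h' (by omega)]
    exact hστ (hs h h.lt_succ_self i n)

theorem continuous_hiddenOut_apply {τ : ℝ → ℝ} (hτ : Continuous τ) (h : ℕ) (i : Fin (d h))
    (n : Fin N) : Continuous fun p : Weights d × Biases d => hiddenOut τ d N X p.1 p.2 h i n := by
  induction h with
  | zero => exact continuous_const
  | succ h ih =>
    simp only [hiddenOut_succ_apply, preAct]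
    fun_prop

theorem continuous_preAct {τ : ℝ → ℝ} (hτ : Continuous τ) (h : ℕ) (i : Fin (d (h + 1)))
    (n : Fin N) : Continuous fun p : Weights d × Biases d => preAct X τ p.1 p.2 h i n := by
  have := continuous_hiddenOut_apply X hτ
  unfold preAct
  fun_prop

theorem eventually_forall_preAct_mem {τ : ℝ → ℝ} (hτ : Continuous τ) {s : Set ℝ}
    (hs : IsOpen s) {H : ℕ} {W : Weights d} {b : Biases d}
    (hWb : ∀ h < H, ∀ i n, preAct X τ W b h i n ∈ s) :
    ∀ᶠ p : Weights d × Biases d in nhds (W, b), ∀ h < H, ∀ i n, preAct X τ p.1 p.2 h i n ∈ s :=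
  (Filter.eventually_all_finite (Set.finite_lt_nat H)).2 fun h hh =>
    Filter.eventually_all.2 fun i => Filter.eventually_all.2 fun n =>
      (continuous_preAct X hτ h i n).continuousAt.eventually_mem (hs.mem_nhds (hWb h hh i n))

theorem hiddenOut_mem_of_affine {τ : ℝ → ℝ} {c e : ℝ} (hτ : ∀ t, τ t = c * t + e)
    {S : Submodule ℝ (Fin N → ℝ)} (hX : ∀ i, X i ∈ S) (h1 : 1 ∈ S) (W : Weights d)
    (b : Biases d) (h : ℕ) (i : Fin (d h)) : hiddenOut τ d N X W b h i ∈ S := by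
  induction h with
  | zero => exact hX i
  | succ h ih =>
    have hrow : hiddenOut τ d N X W b (h + 1) i =
        ∑ j, (c * W h i j) • hiddenOut τ d N X W b h j + (c * b h i + e) • 1 := by
      ext n
      simp only [hiddenOut_succ_apply, preAct, hτ, Pi.add_apply, Finset.sum_apply, Pi.smul_apply,
        smul_eq_mul, Pi.one_apply, mul_one, Finset.mul_sum, mul_add, mul_assoc, add_assoc]
    rw [hrow]
    exact S.add_mem (S.sum_mem fun j _ => S.smul_mem _ (ih j)) (S.smul_mem _ h1)

end Network

section Copy

variable {d : ℕ → ℕ} {N : ℕ} (X : Matrix (Fin (d 0)) (Fin N) ℝ)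

/-- Layer `1` stores `ε • X` in its first `d 0` units; each later layer inverts the affine map
`t ↦ α * (t - a) + β` on them. The remaining units carry the constant pre-activation `a + s`. -/
noncomputable def copyWeights (d : ℕ → ℕ) (ε α : ℝ) : Weights d := fun h => Matrix.of fun i j =>
  if (i : ℕ) < d 0 ∧ (j : ℕ) = i then (if h = 0 then ε else α⁻¹) else 0

noncomputable def copyBiases (d : ℕ → ℕ) (a α β s : ℝ) : Biases d := fun h i =>
  if (i : ℕ) < d 0 then (if h = 0 then a else a - β / α) else a + s

theorem preAct_copy {a α β : ℝ} (hα : α ≠ 0) (ε s : ℝ) {h : ℕ} (hd : ∀ h' ≤ h, d 0 ≤ d h')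
    (i : Fin (d (h + 1))) (n : Fin N) :
    preAct X (fun t => α * (t - a) + β) (copyWeights d ε α) (copyBiases d a α β s) h i n =
      if hi : (i : ℕ) < d 0 then a + ε * X ⟨i, hi⟩ n else a + s := by
  induction h with
  | zero =>
    rw [preAct, copyWeights, copyBiases]
    simp only [Matrix.of_apply, if_true]
    rw [sum_ite_diag_mul le_rfl]
    split_ifs <;> simp [hiddenOut, add_comm]
  | succ h ih =>
    rw [preAct, copyWeights, copyBiases]
    simp only [Matrix.of_apply, Nat.succ_ne_zero, if_false]
    rw [sum_ite_diag_mul (hd (h + 1) le_rfl)]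
    split_ifs with hi
    · rw [hiddenOut_succ_apply, ih (fun h' hh' => hd h' (by omega)), dif_pos hi]
      field_simp
      ring
    · ring

theorem hiddenOut_copy {a α β : ℝ} (hα : α ≠ 0) (ε s : ℝ) {h : ℕ} (hd : ∀ h' ≤ h, d 0 ≤ d h')
    (i : Fin (d (h + 1))) :
    hiddenOut (fun t => α * (t - a) + β) d N X (copyWeights d ε α) (copyBiases d a α β s)
        (h + 1) i =
      if hi : (i : ℕ) < d 0 then (α * ε) • X ⟨i, hi⟩ + β • 1 else (α * s + β) • 1 := by
  ext n
  rw [hiddenOut_succ_apply, preAct_copy X hα ε s hd]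
  split_ifs <;> simp
  ring

theorem one_mem_span_hiddenOut_copy {a α β : ℝ} (hα : α ≠ 0) (ε : ℝ) {s : ℝ} {h : ℕ}
    (hd : ∀ h' ≤ h, d 0 ≤ d h') (hlt : d 0 < d (h + 1)) (hs : α * s + β ≠ 0) :
    1 ∈ Submodule.span ℝ (Set.range (hiddenOut (fun t => α * (t - a) + β) d N X
      (copyWeights d ε α) (copyBiases d a α β s) (h + 1))) := by
  have hrow := hiddenOut_copy X (a := a) (β := β) hα ε s hd ⟨d 0, hlt⟩
  rw [dif_neg (lt_irrefl _)] at hrow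
  rw [← inv_smul_smul₀ hs (1 : Fin N → ℝ), ← hrow]
  exact Submodule.smul_mem _ _ (Submodule.subset_span ⟨_, rfl⟩)

theorem row_mem_span_hiddenOut_copy {a α β : ℝ} (hα : α ≠ 0) {ε s : ℝ} {h : ℕ}
    (hd : ∀ h' ≤ h, d 0 ≤ d h') (hlt : d 0 < d (h + 1)) (hε : ε ≠ 0) (hs : α * s + β ≠ 0)
    (i : Fin (d 0)) :
    X i ∈ Submodule.span ℝ (Set.range (hiddenOut (fun t => α * (t - a) + β) d N X
      (copyWeights d ε α) (copyBiases d a α β s) (h + 1))) := by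
  have hrow := hiddenOut_copy X (a := a) (β := β) hα ε s hd ⟨i, i.2.trans hlt⟩
  rw [dif_pos i.2] at hrow
  rw [← inv_smul_smul₀ (mul_ne_zero hα hε) (X i), ← add_sub_cancel_right ((α * ε) • X i) (β • 1),
    ← hrow]
  exact Submodule.smul_mem _ _ (Submodule.sub_mem _ (Submodule.subset_span ⟨_, rfl⟩)
    (Submodule.smul_mem _ _ (one_mem_span_hiddenOut_copy X hα ε hd hlt hs)))

end Copy

theorem exists_params_preAct_mem_Ioo_and_mem_span {d : ℕ → ℕ} {N : ℕ}
    (X : Matrix (Fin (d 0)) (Fin N) ℝ) {a δ α β : ℝ} (hδ : 0 < δ) (hα : α ≠ 0) {L : ℕ}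
    (hwide : ∀ h, 1 ≤ h → h ≤ L + 1 → d 0 < d h) :
    ∃ (W : Weights d) (b : Biases d),
      (∀ h < L + 1, ∀ i n, preAct X (fun t => α * (t - a) + β) W b h i n ∈
        Set.Ioo (a - δ) (a + δ)) ∧
      (∀ i, X i ∈ Submodule.span ℝ (Set.range (hiddenOut (fun t => α * (t - a) + β) d N X W b
        (L + 1)))) ∧
      1 ∈ Submodule.span ℝ (Set.range (hiddenOut (fun t => α * (t - a) + β) d N X W b
        (L + 1))) := by
  have hd : ∀ h ≤ L, d 0 ≤ d h := fun h hh => by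
    rcases h.eq_zero_or_pos with rfl | h0
    exacts [le_rfl, (hwide h h0 (by omega)).le]
  have hlt := hwide (L + 1) (by omega) le_rfl
  obtain ⟨ε, hε, hεX⟩ := exists_pos_forall_mul_mem_Ioo (fun p : Fin (d 0) × Fin N => X p.1 p.2) hδ
  obtain ⟨s, hsδ, hs_ne⟩ : ∃ s ∈ Set.Ioo (-δ) δ, s ∉ ({-β / α} : Finset ℝ) :=
    (Set.Ioo_infinite (neg_lt_self hδ)).exists_notMem_finset _
  have hαs : α * s + β ≠ 0 := fun h => hs_ne (by rw [Finset.mem_singleton]; field_simp; linarith)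
  refine ⟨copyWeights d ε α, copyBiases d a α β s, fun h hh i n => ?_,
    row_mem_span_hiddenOut_copy X hα hd hlt hε.ne' hαs,
    one_mem_span_hiddenOut_copy X hα ε hd hlt hαs⟩
  rw [preAct_copy X hα ε s fun h' hh' => hd h' (by omega)]
  split_ifs with hi
  · have := hεX (⟨i, hi⟩, n)
    constructor <;> linarith [this.1, this.2]
  · constructor <;> linarith [hsδ.1, hsδ.2]

/-- For an activation that is affine (slope α ≠ 0) on an interval around a,
every hidden layer wider than the input, and data with
rank([Xᵀ,1,Yᵀ]) > rank([Xᵀ,1]), the quadratic loss has a local minimum with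
positive loss value. -/
theorem partially_linear_bad_local_min
    (H N dout : ℕ) (hH : 0 < H) (d : ℕ → ℕ)
    (hwide : ∀ h, 1 ≤ h → h ≤ H → d 0 < d h)
    (σ : ℝ → ℝ) (a δ α β : ℝ) (hδ : 0 < δ) (hα : α ≠ 0)
    (hσ : ∀ t ∈ Set.Ioo (a - δ) (a + δ), σ t = α * (t - a) + β)
    (X : Matrix (Fin (d 0)) (Fin N) ℝ) (Y : Matrix (Fin dout) (Fin N) ℝ)
    (hrank : (Matrix.of fun (n : Fin N) =>
        (Sum.elim (fun i : Fin (d 0) => X i n) (fun _ : Unit => (1 : ℝ)) :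
          Fin (d 0) ⊕ Unit → ℝ)).rank <
      (Matrix.of fun (n : Fin N) =>
        (Sum.elim (Sum.elim (fun i : Fin (d 0) => X i n)
            (fun _ : Unit => (1 : ℝ))) (fun k : Fin dout => Y k n) :
          (Fin (d 0) ⊕ Unit) ⊕ Fin dout → ℝ)).rank) :
    ∃ Θ : ((h : ℕ) → Matrix (Fin (d (h + 1))) (Fin (d h)) ℝ) ×
        ((h : ℕ) → Fin (d (h + 1)) → ℝ) ×
        Matrix (Fin dout) (Fin (d H)) ℝ,
      IsLocalMin
        (fun Θ' : ((h : ℕ) → Matrix (Fin (d (h + 1))) (Fin (d h)) ℝ) ×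
            ((h : ℕ) → Fin (d (h + 1)) → ℝ) ×
            Matrix (Fin dout) (Fin (d H)) ℝ =>
          ∑ k, ∑ n, (Y k n -
            ∑ j, Θ'.2.2 k j * hiddenOut σ d N X Θ'.1 Θ'.2.1 H j n) ^ 2) Θ ∧
      0 < ∑ k, ∑ n, (Y k n -
        ∑ j, Θ.2.2 k j * hiddenOut σ d N X Θ.1 Θ.2.1 H j n) ^ 2 := by
  obtain ⟨L, rfl⟩ : ∃ L, H = L + 1 := ⟨H - 1, by omega⟩
  set A : Matrix (Fin N) (Fin (d 0) ⊕ Unit) ℝ :=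
    Matrix.of fun n => Sum.elim (fun i => X i n) fun _ => 1
  set S := Submodule.span ℝ (Set.range A.col)
  obtain ⟨k₀, hk₀⟩ := A.exists_col_notMem_span_cols_of_rank_lt Yᵀ hrank
  choose z hzS hz using fun k => S.exists_isMinOn_sum_sq_sub (Y k)
  obtain ⟨W, b, hreg, hXT, h1T⟩ :=
    exists_params_preAct_mem_Ioo_and_mem_span X (a := a) (β := β) hδ hα hwide
  have hST : S ≤ Submodule.span ℝ (Set.range (hiddenOut _ d N X W b (L + 1))) :=
    Submodule.span_le.2 <| by rintro _ ⟨i | _, rfl⟩; exacts [hXT i, h1T]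
  choose V hV using fun k => (Submodule.mem_span_range_iff_exists_fun ℝ).1 (hST (hzS k))
  have hloss : ∑ k, ∑ n, (Y k n - ∑ j, V k j * hiddenOut σ d N X W b (L + 1) j n) ^ 2 =
      ∑ k, ∑ n, (Y k n - z k n) ^ 2 := by
    simp only [hiddenOut_eq_of_preAct_mem X hσ hreg, ← hV, Finset.sum_apply, Pi.smul_apply,
      smul_eq_mul]
  refine ⟨(W, b, Matrix.of V), ?_, ?_⟩
  · have hnear := ((continuous_fst.prodMk continuous_snd.fst).tendsto
      (W, b, Matrix.of V)).eventually (eventually_forall_preAct_mem X (by fun_prop) isOpen_Ioo hreg)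
    filter_upwards [hnear] with Θ hΘ
    simp only [Matrix.of_apply]
    rw [hloss, hiddenOut_eq_of_preAct_mem X hσ hΘ]
    exact sum_sum_sq_sub_le_of_rows_mem hz (hiddenOut_mem_of_affine X (S := S) (e := β - α * a)
      (fun t => by ring) (fun i => Submodule.subset_span ⟨Sum.inl i, rfl⟩)
      (Submodule.subset_span ⟨Sum.inr (), rfl⟩) _ _ _) _
  · simp only [Matrix.of_apply]
    rw [hloss]
    exact Finset.sum_pos' (fun k _ => Finset.sum_nonneg fun n _ => sq_nonneg _)
      ⟨k₀, Finset.mem_univ _, sum_sq_sub_pos_of_ne fun h => hk₀ (h ▸ hzS k₀ : Y k₀ ∈ S)⟩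
end

section
/- Let x₁ ≠ x₂ ∈ ℝ and y₁, y₂ ∈ ℝ, and let σ: ℝ → ℝ be analytic with σ(0) ≠ 0 and σ'(t) ≠ 0 for all t. Consider the 1-hidden-layer network with 2 hidden neurons: output ŷ_n = v₁σ(w₁x_n + b₁) + v₂σ(w₂x_n + b₂) for n = 1, 2, and loss E(v, w, b) = Σ_{n=1}^{2}(y_n − ŷ_n)². Then inf E = 0 and every local minimum of E is a global minimum (achieving zero loss). -/
open Filter Set Function Topology

private lemma locmin_comp {α β : Type*} [TopologicalSpace α] [TopologicalSpace β]
    {f : α → ℝ} {γ : β → α} {a : α} {t : β}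
    (hf : IsLocalMin f a) (hγ : Continuous γ) (h : γ t = a) :
    IsLocalMin (fun s => f (γ s)) t := by
  subst h
  exact IsMinFilter.comp_tendsto hf (hγ.tendsto t)

private lemma one_dim_zero {f : ℝ → ℝ} (hf : ∀ t, AnalyticAt ℝ f t) {t0 : ℝ}
    (h : ∀ᶠ t in 𝓝 t0, f t = 0) : ∀ t, f t = 0 := fun t =>
  AnalyticOnNhd.eqOn_zero_of_preconnected_of_eventuallyEq_zero
    (fun z _ => hf z) isPreconnected_univ (mem_univ t0) h (mem_univ t)

/-- Core one-neuron computation: if the loss, as a function of the bias and the weight of a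
neuron with nonzero outer weight, has a local minimum, then both residuals vanish. -/
private lemma key {σ : ℝ → ℝ} (hd : ∀ a, HasDerivAt σ (deriv σ a) a)
    (hσ' : ∀ t, deriv σ t ≠ 0)
    {x₁ x₂ y₁ y₂ V W B C₁ C₂ : ℝ} (hx : x₁ ≠ x₂) (hV : V ≠ 0)
    (hb : IsLocalMin (fun t => (y₁ - (V * σ (W * x₁ + t) + C₁)) ^ 2 +
                              (y₂ - (V * σ (W * x₂ + t) + C₂)) ^ 2) B)
    (hw : IsLocalMin (fun t => (y₁ - (V * σ (t * x₁ + B) + C₁)) ^ 2 +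
                              (y₂ - (V * σ (t * x₂ + B) + C₂)) ^ 2) W) :
    y₁ - (V * σ (W * x₁ + B) + C₁) = 0 ∧ y₂ - (V * σ (W * x₂ + B) + C₂) = 0 := by
  set s₁ := deriv σ (W * x₁ + B) with hs₁
  set s₂ := deriv σ (W * x₂ + B) with hs₂
  set e₁ := y₁ - (V * σ (W * x₁ + B) + C₁) with he₁
  set e₂ := y₂ - (V * σ (W * x₂ + B) + C₂) with he₂
  have Hb : HasDerivAt (fun t => (y₁ - (V * σ (W * x₁ + t) + C₁)) ^ 2 +
      (y₂ - (V * σ (W * x₂ + t) + C₂)) ^ 2)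
      (2 * e₁ ^ 1 * (-(V * (s₁ * 1))) + 2 * e₂ ^ 1 * (-(V * (s₂ * 1)))) B := by
    have i1 : HasDerivAt (fun t : ℝ => W * x₁ + t) 1 B := (hasDerivAt_id B).const_add (W * x₁)
    have i2 : HasDerivAt (fun t : ℝ => W * x₂ + t) 1 B := (hasDerivAt_id B).const_add (W * x₂)
    exact ((((((hd (W * x₁ + B)).comp B i1).const_mul V).add_const C₁).const_sub y₁).pow 2).add
      ((((((hd (W * x₂ + B)).comp B i2).const_mul V).add_const C₂).const_sub y₂).pow 2)
  have Hw : HasDerivAt (fun t => (y₁ - (V * σ (t * x₁ + B) + C₁)) ^ 2 +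
      (y₂ - (V * σ (t * x₂ + B) + C₂)) ^ 2)
      (2 * e₁ ^ 1 * (-(V * (s₁ * (1 * x₁)))) + 2 * e₂ ^ 1 * (-(V * (s₂ * (1 * x₂))))) W := by
    have i1 : HasDerivAt (fun t : ℝ => t * x₁ + B) (1 * x₁) W :=
      ((hasDerivAt_id W).mul_const x₁).add_const B
    have i2 : HasDerivAt (fun t : ℝ => t * x₂ + B) (1 * x₂) W :=
      ((hasDerivAt_id W).mul_const x₂).add_const B
    exact ((((((hd (W * x₁ + B)).comp W i1).const_mul V).add_const C₁).const_sub y₁).pow 2).add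
      ((((((hd (W * x₂ + B)).comp W i2).const_mul V).add_const C₂).const_sub y₂).pow 2)
  have Db : 2 * e₁ ^ 1 * (-(V * (s₁ * 1))) + 2 * e₂ ^ 1 * (-(V * (s₂ * 1))) = 0 := by
    rw [← Hb.deriv]; exact hb.deriv_eq_zero
  have Dw : 2 * e₁ ^ 1 * (-(V * (s₁ * (1 * x₁)))) + 2 * e₂ ^ 1 * (-(V * (s₂ * (1 * x₂)))) = 0 := by
    rw [← Hw.deriv]; exact hw.deriv_eq_zero
  have E1 : e₁ * s₁ + e₂ * s₂ = 0 := by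
    have h1 : V * (e₁ * s₁ + e₂ * s₂) = 0 := by linear_combination (-1 / 2) * Db
    exact (mul_eq_zero.mp h1).resolve_left hV
  have E2 : e₁ * s₁ * x₁ + e₂ * s₂ * x₂ = 0 := by
    have h1 : V * (e₁ * s₁ * x₁ + e₂ * s₂ * x₂) = 0 := by linear_combination (-1 / 2) * Dw
    exact (mul_eq_zero.mp h1).resolve_left hV
  have he2 : e₂ = 0 := by
    have h1 : e₂ * (s₂ * (x₁ - x₂)) = 0 := by linear_combination x₁ * E1 - E2
    rcases mul_eq_zero.mp h1 with h | h
    · exact h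
    · exact absurd h (mul_ne_zero (hσ' _) (sub_ne_zero.2 hx))
  have he1 : e₁ = 0 := by
    have h1 : e₁ * s₁ = 0 := by linear_combination E1 - s₂ * he2
    exact (mul_eq_zero.mp h1).resolve_right (hσ' _)
  exact ⟨he1, he2⟩

/-- For an analytic σ with σ(0) ≠ 0 and σ' nowhere zero, the two-neuron
two-sample network is realizable and has no sub-optimal local minima. -/
theorem two_neuron_two_sample_no_bad_local_min
    (x₁ x₂ y₁ y₂ : ℝ) (hx : x₁ ≠ x₂)
    (σ : ℝ → ℝ) (hσ : ∀ t, AnalyticAt ℝ σ t) (h0 : σ 0 ≠ 0)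
    (hσ' : ∀ t, deriv σ t ≠ 0) :
    (∃ θ : (Fin 2 → ℝ) × (Fin 2 → ℝ) × (Fin 2 → ℝ),
      (y₁ - ∑ i, θ.1 i * σ (θ.2.1 i * x₁ + θ.2.2 i)) ^ 2 +
      (y₂ - ∑ i, θ.1 i * σ (θ.2.1 i * x₂ + θ.2.2 i)) ^ 2 = 0) ∧
    (∀ θ : (Fin 2 → ℝ) × (Fin 2 → ℝ) × (Fin 2 → ℝ),
      IsLocalMin (fun θ : (Fin 2 → ℝ) × (Fin 2 → ℝ) × (Fin 2 → ℝ) =>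
        (y₁ - ∑ i, θ.1 i * σ (θ.2.1 i * x₁ + θ.2.2 i)) ^ 2 +
        (y₂ - ∑ i, θ.1 i * σ (θ.2.1 i * x₂ + θ.2.2 i)) ^ 2) θ →
      (y₁ - ∑ i, θ.1 i * σ (θ.2.1 i * x₁ + θ.2.2 i)) ^ 2 +
      (y₂ - ∑ i, θ.1 i * σ (θ.2.1 i * x₂ + θ.2.2 i)) ^ 2 = 0) := by
  classical
  have hd : ∀ a, HasDerivAt σ (deriv σ a) a := fun a => (hσ a).differentiableAt.hasDerivAt
  have hcont : Continuous σ := continuous_iff_continuousAt.2 fun t => (hσ t).continuousAt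
  have hinj : Function.Injective σ := by
    intro a b hab
    rcases lt_trichotomy a b with h | h | h
    · obtain ⟨c, -, hc0⟩ := exists_deriv_eq_zero h hcont.continuousOn hab
      exact absurd hc0 (hσ' c)
    · exact h
    · obtain ⟨c, -, hc0⟩ := exists_deriv_eq_zero h hcont.continuousOn hab.symm
      exact absurd hc0 (hσ' c)
  constructor
  · -- realizability
    have hσne : σ x₁ - σ x₂ ≠ 0 := sub_ne_zero.2 fun h => hx (hinj h)
    refine ⟨(![(y₁ - (y₁ - y₂) / (σ x₁ - σ x₂) * σ x₁) / σ 0,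
        (y₁ - y₂) / (σ x₁ - σ x₂)], ![0, 1], ![0, 0]), ?_⟩
    have r1 : y₁ - ((y₁ - (y₁ - y₂) / (σ x₁ - σ x₂) * σ x₁) / σ 0 * σ 0 +
        (y₁ - y₂) / (σ x₁ - σ x₂) * σ x₁) = 0 := by field_simp; ring
    have r2 : y₂ - ((y₁ - (y₁ - y₂) / (σ x₁ - σ x₂) * σ x₁) / σ 0 * σ 0 +
        (y₁ - y₂) / (σ x₁ - σ x₂) * σ x₂) = 0 := by field_simp; ring
    simp only [Fin.sum_univ_two, Matrix.cons_val_zero, Matrix.cons_val_one, Matrix.head_cons,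
      zero_mul, zero_add, one_mul, add_zero]
    rw [r1, r2]
    norm_num
  · -- no bad local minima
    rintro ⟨v, w, b⟩ hmin
    set F : (Fin 2 → ℝ) × (Fin 2 → ℝ) × (Fin 2 → ℝ) → ℝ := fun θ =>
      (y₁ - ∑ i, θ.1 i * σ (θ.2.1 i * x₁ + θ.2.2 i)) ^ 2 +
      (y₂ - ∑ i, θ.1 i * σ (θ.2.1 i * x₂ + θ.2.2 i)) ^ 2 with hF
    by_cases h00 : v 0 ≠ 0
    · -- use neuron 0
      have Lb : IsLocalMin (fun t => F (v, w, Function.update b 0 t)) (b 0) :=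
        locmin_comp hmin
          (by fun_prop)
          (by simp)
      have Lw : IsLocalMin (fun t => F (v, Function.update w 0 t, b)) (w 0) :=
        locmin_comp hmin
          (by fun_prop)
          (by simp)
      have eb : (fun t => F (v, w, Function.update b 0 t)) =
          fun t => (y₁ - (v 0 * σ (w 0 * x₁ + t) + v 1 * σ (w 1 * x₁ + b 1))) ^ 2 +
            (y₂ - (v 0 * σ (w 0 * x₂ + t) + v 1 * σ (w 1 * x₂ + b 1))) ^ 2 := by
        funext t; simp [hF, Fin.sum_univ_two, Function.update]
      have ew : (fun t => F (v, Function.update w 0 t, b)) =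
          fun t => (y₁ - (v 0 * σ (t * x₁ + b 0) + v 1 * σ (w 1 * x₁ + b 1))) ^ 2 +
            (y₂ - (v 0 * σ (t * x₂ + b 0) + v 1 * σ (w 1 * x₂ + b 1))) ^ 2 := by
        funext t; simp [hF, Fin.sum_univ_two, Function.update]
      rw [eb] at Lb; rw [ew] at Lw
      obtain ⟨he1, he2⟩ := key hd hσ' hx h00 Lb Lw
      simp only [hF, Fin.sum_univ_two]
      rw [he1, he2]; norm_num
    · push_neg at h00
      by_cases h11 : v 1 ≠ 0
      · -- use neuron 1
        have Lb : IsLocalMin (fun t => F (v, w, Function.update b 1 t)) (b 1) :=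
          locmin_comp hmin
            (continuous_const.prodMk (continuous_const.prodMk
              (continuous_const.update 1 continuous_id)))
            (by simp)
        have Lw : IsLocalMin (fun t => F (v, Function.update w 1 t, b)) (w 1) :=
          locmin_comp hmin
            (by fun_prop)
            (by simp)
        have eb : (fun t => F (v, w, Function.update b 1 t)) =
            fun t => (y₁ - (v 1 * σ (w 1 * x₁ + t) + v 0 * σ (w 0 * x₁ + b 0))) ^ 2 +
              (y₂ - (v 1 * σ (w 1 * x₂ + t) + v 0 * σ (w 0 * x₂ + b 0))) ^ 2 := by
          funext t; simp [hF, Fin.sum_univ_two, Function.update]; ring_nf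
        have ew : (fun t => F (v, Function.update w 1 t, b)) =
            fun t => (y₁ - (v 1 * σ (t * x₁ + b 1) + v 0 * σ (w 0 * x₁ + b 0))) ^ 2 +
              (y₂ - (v 1 * σ (t * x₂ + b 1) + v 0 * σ (w 0 * x₂ + b 0))) ^ 2 := by
          funext t; simp [hF, Fin.sum_univ_two, Function.update]; ring_nf
        rw [eb] at Lb; rw [ew] at Lw
        obtain ⟨he1, he2⟩ := key hd hσ' hx h11 Lb Lw
        simp only [hF, Fin.sum_univ_two]
        have g1 : y₁ - (v 0 * σ (w 0 * x₁ + b 0) + v 1 * σ (w 1 * x₁ + b 1)) = 0 := by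
          linear_combination he1
        have g2 : y₂ - (v 0 * σ (w 0 * x₂ + b 0) + v 1 * σ (w 1 * x₂ + b 1)) = 0 := by
          linear_combination he2
        rw [g1, g2]; norm_num
      · -- v = 0 case
        push_neg at h11
        -- the value of F at any parameter with v = 0
        obtain ⟨U, hU, hUopen, hθU⟩ := eventually_nhds_iff.mp hmin
        have hΓcont : Continuous (fun p : ℝ × ℝ =>
            ((v, Function.update w 0 p.1, Function.update b 0 p.2) :
              (Fin 2 → ℝ) × (Fin 2 → ℝ) × (Fin 2 → ℝ))) :=
          by fun_prop
        have hΓval : (fun p : ℝ × ℝ =>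
            ((v, Function.update w 0 p.1, Function.update b 0 p.2) :
              (Fin 2 → ℝ) × (Fin 2 → ℝ) × (Fin 2 → ℝ))) (w 0, b 0) = (v, w, b) := by simp
        have hmemU : ∀ᶠ p : ℝ × ℝ in 𝓝 (w 0, b 0),
            (v, Function.update w 0 p.1, Function.update b 0 p.2) ∈ U := by
          have ht : Filter.Tendsto (fun p : ℝ × ℝ =>
              ((v, Function.update w 0 p.1, Function.update b 0 p.2) :
                (Fin 2 → ℝ) × (Fin 2 → ℝ) × (Fin 2 → ℝ))) (𝓝 (w 0, b 0)) (𝓝 (v, w, b)) := by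
            simpa using hΓcont.tendsto (w 0, b 0)
          exact ht.eventually (hUopen.eventually_mem hθU)
        have hg : ∀ᶠ p : ℝ × ℝ in 𝓝 (w 0, b 0),
            y₁ * σ (p.1 * x₁ + p.2) + y₂ * σ (p.1 * x₂ + p.2) = 0 := by
          filter_upwards [hmemU] with p hp
          -- F is locally minimal at (v, update w 0 p.1, update b 0 p.2)
          have hEq : F (v, Function.update w 0 p.1, Function.update b 0 p.2) = F (v, w, b) := by
            simp [hF, Fin.sum_univ_two, Function.update, h00, h11]
          have hmin' : IsLocalMin F (v, Function.update w 0 p.1, Function.update b 0 p.2) := by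
            refine eventually_nhds_iff.mpr ⟨U, fun x hx' => ?_, hUopen, hp⟩
            rw [hEq]; exact hU x hx'
          have Lv : IsLocalMin (fun t => F (Function.update v 0 t,
              Function.update w 0 p.1, Function.update b 0 p.2)) (v 0) :=
            locmin_comp hmin'
              (by fun_prop)
              (by simp)
          have ev : (fun t => F (Function.update v 0 t,
              Function.update w 0 p.1, Function.update b 0 p.2)) =
              fun t => (y₁ - t * σ (p.1 * x₁ + p.2)) ^ 2 +
                (y₂ - t * σ (p.1 * x₂ + p.2)) ^ 2 := by
            funext t; simp [hF, Fin.sum_univ_two, Function.update, h11]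
          rw [ev, h00] at Lv
          have Hv : HasDerivAt (fun t => (y₁ - t * σ (p.1 * x₁ + p.2)) ^ 2 +
              (y₂ - t * σ (p.1 * x₂ + p.2)) ^ 2)
              (2 * (y₁ - 0 * σ (p.1 * x₁ + p.2)) ^ 1 * (-(1 * σ (p.1 * x₁ + p.2))) +
               2 * (y₂ - 0 * σ (p.1 * x₂ + p.2)) ^ 1 * (-(1 * σ (p.1 * x₂ + p.2)))) 0 :=
            (((((hasDerivAt_id (0 : ℝ)).mul_const (σ (p.1 * x₁ + p.2))).const_sub y₁).pow 2)).add
              ((((hasDerivAt_id (0 : ℝ)).mul_const (σ (p.1 * x₂ + p.2))).const_sub y₂).pow 2)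
          have Dv : 2 * (y₁ - 0 * σ (p.1 * x₁ + p.2)) ^ 1 * (-(1 * σ (p.1 * x₁ + p.2))) +
              2 * (y₂ - 0 * σ (p.1 * x₂ + p.2)) ^ 1 * (-(1 * σ (p.1 * x₂ + p.2))) = 0 := by
            rw [← Hv.deriv]; exact Lv.deriv_eq_zero
          linear_combination (-1 / 2) * Dv
        -- identity theorem, in each variable separately
        obtain ⟨Uw, hUw, Vb, hVb, hsub⟩ := mem_nhds_prod_iff.mp hg
        have han_b : ∀ (W' t : ℝ), AnalyticAt ℝ
            (fun B' => y₁ * σ (W' * x₁ + B') + y₂ * σ (W' * x₂ + B')) t := by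
          intro W' t
          exact (analyticAt_const.mul ((hσ (W' * x₁ + t)).comp
              (analyticAt_const.add analyticAt_id))).add
            (analyticAt_const.mul ((hσ (W' * x₂ + t)).comp
              (analyticAt_const.add analyticAt_id)))
        have han_w : ∀ (B' t : ℝ), AnalyticAt ℝ
            (fun W' => y₁ * σ (W' * x₁ + B') + y₂ * σ (W' * x₂ + B')) t := by
          intro B' t
          have i1 : AnalyticAt ℝ (fun W' : ℝ => W' * x₁ + B') t :=
            (analyticAt_id.mul analyticAt_const).add analyticAt_const
          have i2 : AnalyticAt ℝ (fun W' : ℝ => W' * x₂ + B') t :=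
            (analyticAt_id.mul analyticAt_const).add analyticAt_const
          have c1 : AnalyticAt ℝ (fun W' : ℝ => σ (W' * x₁ + B')) t := (hσ _).comp i1
          have c2 : AnalyticAt ℝ (fun W' : ℝ => σ (W' * x₂ + B')) t := (hσ _).comp i2
          exact (analyticAt_const.mul c1).add (analyticAt_const.mul c2)
        have step1 : ∀ W' ∈ Uw, ∀ B', y₁ * σ (W' * x₁ + B') + y₂ * σ (W' * x₂ + B') = 0 := by
          intro W' hW'
          refine one_dim_zero (han_b W') (t0 := b 0) ?_
          filter_upwards [hVb] with B' hB'
          exact hsub (Set.mk_mem_prod hW' hB')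
        have step2 : ∀ W' B', y₁ * σ (W' * x₁ + B') + y₂ * σ (W' * x₂ + B') = 0 := by
          intro W' B'
          refine one_dim_zero (han_w B') (t0 := w 0) ?_ W'
          filter_upwards [hUw] with W'' hW''
          exact step1 W'' hW'' B'
        have hsum : y₁ + y₂ = 0 := by
          have h := step2 0 0
          simp only [zero_mul, zero_add, add_zero] at h
          have : (y₁ + y₂) * σ 0 = 0 := by linear_combination h
          exact (mul_eq_zero.mp this).resolve_right h0
        have hy1 : y₁ = 0 := by
          have hk : (fun W' => y₁ * σ (W' * x₁ + 0) + y₂ * σ (W' * x₂ + 0)) =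
              fun _ => (0 : ℝ) := funext fun W' => step2 W' 0
          have Hk : HasDerivAt (fun W' => y₁ * σ (W' * x₁ + 0) + y₂ * σ (W' * x₂ + 0))
              (y₁ * (deriv σ (0 * x₁ + 0) * (1 * x₁)) + y₂ * (deriv σ (0 * x₂ + 0) * (1 * x₂)))
              0 := by
            have i1 : HasDerivAt (fun W' : ℝ => W' * x₁ + 0) (1 * x₁) 0 :=
              ((hasDerivAt_id (0 : ℝ)).mul_const x₁).add_const 0
            have i2 : HasDerivAt (fun W' : ℝ => W' * x₂ + 0) (1 * x₂) 0 :=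
              ((hasDerivAt_id (0 : ℝ)).mul_const x₂).add_const 0
            have c1 : HasDerivAt (fun W' : ℝ => σ (W' * x₁ + 0))
                (deriv σ (0 * x₁ + 0) * (1 * x₁)) 0 :=
              HasDerivAt.comp_of_eq (hh₂ := hd (0 * x₁ + 0)) (hh := i1) (hy := by norm_num)
            have c2 : HasDerivAt (fun W' : ℝ => σ (W' * x₂ + 0))
                (deriv σ (0 * x₂ + 0) * (1 * x₂)) 0 :=
              HasDerivAt.comp_of_eq (hh₂ := hd (0 * x₂ + 0)) (hh := i2) (hy := by norm_num)
            exact (c1.const_mul y₁).add (c2.const_mul y₂)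
          have hD : y₁ * (deriv σ (0 * x₁ + 0) * (1 * x₁)) +
              y₂ * (deriv σ (0 * x₂ + 0) * (1 * x₂)) = 0 := by
            rw [← Hk.deriv, hk]
            simp
          simp only [zero_mul, zero_add, one_mul] at hD
          have hy2 : y₂ = -y₁ := by linarith
          rw [hy2] at hD
          have : y₁ * (deriv σ 0 * (x₁ - x₂)) = 0 := by linear_combination hD
          rcases mul_eq_zero.mp this with h | h
          · exact h
          · exact absurd h (mul_ne_zero (hσ' 0) (sub_ne_zero.2 hx))
        have hy2 : y₂ = 0 := by linarith
        simp [hF, Fin.sum_univ_two, h00, h11, hy1, hy2]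
end

section
/- Let d₀ and N be positive integers with d₀²/2 + 3d₀/2 + 1 ≤ N. Then for almost every X ∈ ℝ^{d₀×N} (i.e., outside a Lebesgue-null set), the set of vectors 𝒳 = {1_N} ∪ {X_{(i,:)} : 1 ≤ i ≤ d₀} ∪ {X_{(i,:)} ∘ X_{(j,:)} : 1 ≤ i ≤ j ≤ d₀} ⊆ ℝ^N is linearly independent, where X_{(i,:)} denotes the i-th row of X viewed as a vector in ℝ^N and ∘ is the entrywise product. -/
/-!
The vectors in question are the rows of the matrix obtained by evaluating the monomials
`1, xᵢ, xᵢxⱼ` (`i ≤ j`) at the `N` columns of `X`. Distinct monomials are linearly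
independent, and the rows of a real matrix `M` are independent iff the Gram determinant
`det (M Mᵀ)` is nonzero; here it is a polynomial in the entries of `X`. Its zero set is
Lebesgue-null as soon as the polynomial is nonzero (induction on the number of variables,
using Fubini and the finiteness of the roots of a nonzero one-variable polynomial). It is
nonzero because some `X` makes the rows independent: linearly independent functions are
already independent on a set of at most as many points as there are functions, built greedily
so that each new point shrinks the space of combinations vanishing on the points so far.
-/

open MeasureTheory

/-- The family consisting of the all-ones vector, the rows of X, and the
entrywise products of pairs of rows of X. -/
def rowFamily (d₀ N : ℕ) (X : Fin d₀ → Fin N → ℝ) :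
    (Unit ⊕ Fin d₀ ⊕ {p : Fin d₀ × Fin d₀ // p.1 ≤ p.2}) → Fin N → ℝ :=
  Sum.elim (fun _ _ => 1)
    (Sum.elim (fun i n => X i n) (fun p n => X p.1.1 n * X p.1.2 n))

open scoped Matrix

section EvaluationPoints

variable {K S ι : Type*} [Field K] [Fintype ι] {f : ι → S → K}

variable (f) in
def vanishingOn (T : Set S) : Submodule K (ι → K) :=
  ⨅ s ∈ T, LinearMap.ker (LinearMap.proj s ∘ₗ Fintype.linearCombination K f)

theorem mem_vanishingOn {T : Set S} {c : ι → K} :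
    c ∈ vanishingOn f T ↔ ∀ s ∈ T, ∑ a, c a * f a s = 0 := by
  simp [vanishingOn, Fintype.linearCombination_apply]

theorem vanishingOn_anti {T T' : Set S} (h : T ⊆ T') : vanishingOn f T' ≤ vanishingOn f T :=
  fun _ hc => mem_vanishingOn.2 fun s hs => mem_vanishingOn.1 hc s (h hs)

theorem LinearIndependent.exists_vanishingOn_eq_bot (hf : LinearIndependent K f)
    (T : Finset S) :
    ∃ U : Finset S, U.card ≤ T.card + Module.finrank K (vanishingOn f T) ∧
      vanishingOn f U = ⊥ := by
  classical
  induction hn : Module.finrank K (vanishingOn f T) using Nat.strong_induction_on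
    generalizing T with | _ n ih
  by_cases hbot : vanishingOn f T = ⊥
  · exact ⟨T, by omega, hbot⟩
  obtain ⟨c, hcT, hc0⟩ := (Submodule.ne_bot_iff _).1 hbot
  obtain ⟨s, hs⟩ : ∃ s, ∑ a, c a * f a s ≠ 0 := by
    by_contra! h
    exact hc0 (funext (Fintype.linearIndependent_iff.1 hf c (funext fun s => by simpa using h s)))
  have hlt : vanishingOn f ↑(insert s T) < vanishingOn f T :=
    lt_of_le_of_ne (vanishingOn_anti (by simp)) fun h =>
      hs (mem_vanishingOn.1 (h ▸ hcT) s (by simp))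
  have hrank := Submodule.finrank_lt_finrank_of_lt hlt
  obtain ⟨U, hU, hUbot⟩ := ih _ (hn ▸ hrank) _ rfl
  exact ⟨U, by grw [hU, Finset.card_insert_le]; omega, hUbot⟩

theorem LinearIndependent.exists_finset_linearIndependent_restrict
    (hf : LinearIndependent K f) :
    ∃ U : Finset S, U.card ≤ Fintype.card ι ∧
      LinearIndependent K fun a (s : U) => f a s := by
  obtain ⟨U, hU, hUbot⟩ := hf.exists_vanishingOn_eq_bot ∅
  have hempty : vanishingOn f ∅ = ⊤ := by simp [vanishingOn]
  rw [Finset.coe_empty, hempty, finrank_top, Module.finrank_fintype_fun_eq_card] at hU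
  refine ⟨U, by simpa using hU, Fintype.linearIndependent_iff.2 fun c hc => congrFun ?_⟩
  have : c ∈ vanishingOn f U := mem_vanishingOn.2 fun s hs => by
    simpa using congrFun hc ⟨s, hs⟩
  rwa [hUbot, Submodule.mem_bot] at this

theorem LinearIndependent.exists_linearIndependent_comp [Nonempty S] {κ : Type*} [Fintype κ]
    (hf : LinearIndependent K f) (hcard : Fintype.card ι ≤ Fintype.card κ) :
    ∃ x : κ → S, LinearIndependent K (fun a k => f a (x k)) := by
  obtain ⟨U, hU, hUf⟩ := hf.exists_finset_linearIndependent_restrict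
  obtain ⟨e⟩ : Nonempty (U ↪ κ) :=
    Function.Embedding.nonempty_of_card_le (by simpa using hU.trans hcard)
  refine ⟨Function.extend e Subtype.val (fun _ => Classical.arbitrary S), ?_⟩
  refine .of_comp (LinearMap.funLeft K K e) ?_
  convert hUf using 2 with a
  ext s
  simp [LinearMap.funLeft, e.injective.extend_apply]

end EvaluationPoints

theorem Matrix.linearIndependent_rows_iff_isUnit_mul_transpose {m n : Type*} [Fintype m]
    [Fintype n] [DecidableEq m] (M : Matrix m n ℝ) :
    LinearIndependent ℝ M.row ↔ IsUnit (M * Mᵀ) := by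
  refine ⟨fun h => ?_, fun h => ?_⟩
  · simpa using (Matrix.PosDef.mul_conjTranspose_self M (vecMul_injective_iff.2 h)).isUnit
  · refine vecMul_injective_iff.1 fun v w hvw => vecMul_injective_iff_isUnit.2 h ?_
    simp only [← vecMul_vecMul, hvw]

theorem MeasureTheory.measurePreserving_curry_symm (ι κ : Type*) {α : Type*} [Fintype ι]
    [Fintype κ] [MeasurableSpace α] (μ : Measure α) [SigmaFinite μ] :
    MeasurePreserving (MeasurableEquiv.curry ι κ α).symm
      (Measure.pi fun _ => Measure.pi fun _ => μ) (Measure.pi fun _ => μ) := by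
  refine ⟨by fun_prop, (Measure.pi_eq fun s hs => ?_).symm⟩
  have hpre : (MeasurableEquiv.curry ι κ α).symm ⁻¹' Set.univ.pi s =
      Set.univ.pi fun i => Set.univ.pi fun j => s (i, j) := by
    ext X
    simp [MeasurableEquiv.curry]
  rw [MeasurableEquiv.map_apply, hpre, Measure.pi_pi, Fintype.prod_prod_type]
  simp_rw [Measure.pi_pi]

noncomputable section

namespace MvPolynomial

theorem volume_setOf_eval_rename_eq_zero {α β : Type*} [Fintype α] [Fintype β] (e : α ≃ β)
    {p : MvPolynomial α ℝ} (hp : volume {x : α → ℝ | eval x p = 0} = 0) :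
    volume {x : β → ℝ | eval x (rename e p) = 0} = 0 := by
  rw [← (volume_measurePreserving_piCongrLeft (fun _ : β => ℝ) e).measure_preimage_equiv]
  convert hp using 2
  ext x
  have hx : (MeasurableEquiv.piCongrLeft (fun _ => ℝ) e) x ∘ e = x :=
    _root_.funext (Equiv.piCongrLeft_apply_apply (fun _ => ℝ) e x)
  simp [eval_rename, hx]

theorem volume_setOf_eval_option_eq_zero {σ : Type*} [Fintype σ]
    (ih : ∀ q : MvPolynomial σ ℝ, q ≠ 0 → volume {x : σ → ℝ | eval x q = 0} = 0)
    {p : MvPolynomial (Option σ) ℝ} (hp : p ≠ 0) :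
    volume {x : Option σ → ℝ | eval x p = 0} = 0 := by
  set q := optionEquivLeft ℝ σ p
  have hq : q ≠ 0 := by simpa [q] using hp
  have hpres : MeasurePreserving (MeasurableEquiv.piOptionEquivProd fun _ : Option σ => ℝ).symm
      (volume.prod volume) volume :=
    ⟨by fun_prop, Measure.pi_map_piOptionEquivProd fun _ => volume⟩
  have hmeas : MeasurableSet {x : Option σ → ℝ | eval x p = 0} :=
    (isClosed_eq (continuous_eval p) continuous_const).measurableSet
  rw [← hpres.measure_preimage hmeas.nullMeasurableSet,
    Measure.measure_prod_null (hmeas.preimage (by fun_prop))]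
  have hlead : ∀ᵐ s : σ → ℝ, eval s q.leadingCoeff ≠ 0 :=
    measure_eq_zero_iff_ae_notMem.1 (ih _ (Polynomial.leadingCoeff_ne_zero.2 hq))
  filter_upwards [hlead] with s hs
  have hqs : q.map (eval s) ≠ 0 := fun h => hs <| by
    simpa [Polynomial.coeff_map] using congrArg (Polynomial.coeff · q.natDegree) h
  refine measure_mono_null (fun y hy => ?_)
    ((Polynomial.finite_setOfPred_isRoot hqs).measure_zero _)
  have hsymm : (MeasurableEquiv.piOptionEquivProd fun _ : Option σ => ℝ).symm (s, y) =
      fun o => o.elim y s := by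
    ext (_ | i) <;> rfl
  simp only [Set.mem_preimage, Set.mem_ofPred_eq, hsymm] at hy
  rwa [optionEquivLeft_elim_eval] at hy

theorem volume_setOf_eval_eq_zero {σ : Type*} [Fintype σ] {p : MvPolynomial σ ℝ}
    (hp : p ≠ 0) :
    volume {x : σ → ℝ | eval x p = 0} = 0 := by
  refine Fintype.induction_empty_option (P := fun σ _ => ∀ p : MvPolynomial σ ℝ, p ≠ 0 →
    volume {x : σ → ℝ | eval x p = 0} = 0) ?_ ?_ ?_ σ p hp
  · intro α β _ e ih p hp
    let : Fintype α := .ofEquiv β e.symm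
    simpa using volume_setOf_eval_rename_eq_zero e
      (ih _ ((rename_injective _ e.symm.injective).ne_iff' (map_zero _) |>.2 hp))
  · refine fun p hp => measure_mono_null (fun x hx => hp ?_) measure_empty
    obtain ⟨c, rfl⟩ := C_surjective PEmpty p
    simpa using hx
  · exact fun σ _ ih p => volume_setOf_eval_option_eq_zero ih

theorem prod_map_X_eq_monomial {R σ : Type*} [CommSemiring R] [DecidableEq σ] (s : Multiset σ) :
    (s.map X).prod = monomial (Multiset.toFinsupp s) (1 : R) := by
  induction s using Multiset.induction_on with
  | empty => simp
  | cons a s ih =>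
    rw [Multiset.map_cons, Multiset.prod_cons, ih, ← Multiset.singleton_add,
      Multiset.toFinsupp_add, Multiset.toFinsupp_singleton, X, monomial_mul, one_mul]

theorem linearIndependent_prod_map_X {R σ ι : Type*} [CommSemiring R] {E : ι → Multiset σ}
    (hE : Function.Injective E) : LinearIndependent R fun a => ((E a).map (X (R := R))).prod := by
  classical
  simp_rw [prod_map_X_eq_monomial]
  exact (basisMonomials σ R).linearIndependent.comp _ (Multiset.toFinsupp.injective.comp hE)

variable {K R σ ι κ : Type*}

def evalMatrix [CommSemiring R] (p : ι → MvPolynomial σ R) (X : σ → κ → R) :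
    Matrix ι κ R :=
  .of fun a k => eval (fun i => X i k) (p a)

def genericEvalMatrix [CommSemiring R] (p : ι → MvPolynomial σ R) :
    Matrix ι κ (MvPolynomial (σ × κ) R) :=
  .of fun a k => rename (·, k) (p a)

theorem genericEvalMatrix_map_eval [CommSemiring R] (p : ι → MvPolynomial σ R)
    (X : σ → κ → R) :
    (genericEvalMatrix p).map (eval (Function.uncurry X)) = evalMatrix p X := by
  ext a k
  simp [genericEvalMatrix, evalMatrix, eval_rename, Function.comp_def]

theorem linearIndependent_eval_of_linearIndependent [Field K] [Infinite K]
    {p : ι → MvPolynomial σ K} (hp : LinearIndependent K p) :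
    LinearIndependent K fun a (x : σ → K) => eval x (p a) := by
  have hinj : Function.Injective (LinearMap.pi fun x : σ → K => (aeval x).toLinearMap) :=
    fun q r h => funext fun x => by simpa using congrFun h x
  exact hp.map' _ (LinearMap.ker_eq_bot.2 hinj)

theorem exists_linearIndependent_evalMatrix [Field K] [Infinite K] [Fintype ι] [Fintype κ]
    {p : ι → MvPolynomial σ K} (hp : LinearIndependent K p)
    (hcard : Fintype.card ι ≤ Fintype.card κ) :
    ∃ X : σ → κ → K, LinearIndependent K (evalMatrix p X).row := by
  obtain ⟨x, hx⟩ :=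
    (linearIndependent_eval_of_linearIndependent hp).exists_linearIndependent_comp hcard
  exact ⟨fun i k => x k i, hx⟩

theorem ae_linearIndependent_evalMatrix [Fintype σ] [Fintype ι] [Fintype κ]
    {p : ι → MvPolynomial σ ℝ} (hp : LinearIndependent ℝ p)
    (hcard : Fintype.card ι ≤ Fintype.card κ) :
    ∀ᵐ X : σ → κ → ℝ, LinearIndependent ℝ (evalMatrix p X).row := by
  classical
  set P := genericEvalMatrix (κ := κ) p
  have heval (X : σ → κ → ℝ) :
      eval (Function.uncurry X) (P * Pᵀ).det ≠ 0 ↔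
        LinearIndependent ℝ (evalMatrix p X).row := by
    rw [Matrix.linearIndependent_rows_iff_isUnit_mul_transpose, Matrix.isUnit_iff_isUnit_det,
      isUnit_iff_ne_zero, RingHom.map_det, RingHom.mapMatrix_apply, Matrix.map_mul,
      Matrix.transpose_map, genericEvalMatrix_map_eval]
  obtain ⟨X₀, hX₀⟩ := exists_linearIndependent_evalMatrix hp hcard
  have hne : (P * Pᵀ).det ≠ 0 := fun h => (heval X₀).2 hX₀ (by rw [h, map_zero])
  have hnull : volume ((MeasurableEquiv.curry σ κ ℝ).symm ⁻¹'
      {x | eval x (P * Pᵀ).det = 0}) = 0 :=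
    ((measurePreserving_curry_symm σ κ volume).measure_preimage_equiv _).trans
      (volume_setOf_eval_eq_zero hne)
  exact ae_iff.2 (measure_mono_null (fun X hX => not_not.1 (mt (heval X).1 hX)) hnull)

end MvPolynomial

end

abbrev QuadraticIndex (α : Type*) [LinearOrder α] := Unit ⊕ α ⊕ {p : α × α // p.1 ≤ p.2}

def quadraticExponents {α : Type*} [LinearOrder α] : QuadraticIndex α → Multiset α :=
  Sum.elim (fun _ => 0) (Sum.elim (fun i => {i}) (fun p => {p.1.1, p.1.2}))

theorem quadraticExponents_injective {α : Type*} [LinearOrder α] :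
    Function.Injective (quadraticExponents (α := α)) := by
  rintro (_ | i | ⟨⟨a, b⟩, hab⟩) (_ | j | ⟨⟨c, d⟩, hcd⟩) h <;>
    simp_all [quadraticExponents]
  · simpa using congrArg Multiset.card h
  · rcases Multiset.cons_eq_cons.1 h with ⟨rfl, h⟩ | ⟨hac, cs, hb, hd⟩
    · simpa using h
    · rw [Multiset.singleton_eq_cons_iff] at hb hd
      grind

theorem card_quadraticIndex (α : Type*) [LinearOrder α] [Fintype α] :
    2 * Fintype.card (QuadraticIndex α) = Fintype.card α ^ 2 + 3 * Fintype.card α + 2 := by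
  have h := Nat.add_one_mul_choose_eq (Fintype.card α) 1
  rw [Nat.choose_one_right] at h
  simp only [Fintype.card_sum, Fintype.card_unit, ← Fintype.card_congr Sym2.sortEquiv, Sym2.card]
  nlinarith [h]

noncomputable def quadraticMonomial {R σ : Type*} [CommSemiring R] [LinearOrder σ]
    (a : QuadraticIndex σ) : MvPolynomial σ R :=
  ((quadraticExponents a).map MvPolynomial.X).prod

theorem linearIndependent_quadraticMonomial (R σ : Type*) [CommSemiring R] [LinearOrder σ] :
    LinearIndependent R (quadraticMonomial (R := R) (σ := σ)) :=
  MvPolynomial.linearIndependent_prod_map_X quadraticExponents_injective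

/-- If d₀²/2 + 3d₀/2 + 1 ≤ N, then for almost every X ∈ ℝ^{d₀×N} the vectors
1, the rows of X, and the Hadamard products of pairs of rows of X are linearly
independent. -/
theorem generic_input_independent (d₀ N : ℕ)
    (hN : d₀ ^ 2 + 3 * d₀ + 2 ≤ 2 * N) :
    volume {X : Fin d₀ → Fin N → ℝ |
      ¬ LinearIndependent ℝ (rowFamily d₀ N X)} = 0 := by
  have hcard : Fintype.card (QuadraticIndex (Fin d₀)) ≤ Fintype.card (Fin N) := by
    have := card_quadraticIndex (Fin d₀)
    simp only [Fintype.card_fin] at this ⊢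
    omega
  have hrow (X : Fin d₀ → Fin N → ℝ) :
      rowFamily d₀ N X = (MvPolynomial.evalMatrix quadraticMonomial X).row := by
    ext (_ | i | q) n <;>
      simp [rowFamily, MvPolynomial.evalMatrix, quadraticMonomial, quadraticExponents]
  simpa only [hrow] using ae_iff.1 <|
    MvPolynomial.ae_linearIndependent_evalMatrix (linearIndependent_quadraticMonomial ℝ _) hcard
end
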